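/- arXiv:2504.10895 — 5 statements merged into one kernel-verified Lean document; each statement's English description precedes it below -/
import Mathlib

section
/- Let a ∈ [0, 1/2) and c > 0. For t > 0 and x, y > 0 define H_{t,a,c}(x,y) = t^{-1/2} · exp(−|x−y|²/(c·t)) · (1 + √t/x)^a · (1 + √t/y)^a. Then there exists a constant C > 0, depending only on a and c, such that ∫_0^∞ H_{t,a,c}(x,z) · H_{t,a,c}(z,y) dz ≤ C · H_{t,a,4c}(x,y) for all t > 0 and all x, y > 0. -/
open MeasureTheory Real Set

/-- The kernel `H_{t,a,c}(x,y) = t^{-1/2} exp(-|x-y|²/(ct)) (1+√t/x)^a (1+√t/y)^a`. -/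
noncomputable def Hker (t a c x y : ℝ) : ℝ :=
  (1 / Real.sqrt t) * Real.exp (-((x - y) ^ 2 / (c * t))) *
    (1 + Real.sqrt t / x) ^ a * (1 + Real.sqrt t / y) ^ a

lemma hker_pos {t a c x y : ℝ} (ht : 0 < t) (hx : 0 < x) (hy : 0 < y) :
    0 < Hker t a c x y := by
  have hs : 0 < Real.sqrt t := Real.sqrt_pos.mpr ht
  unfold Hker
  have h1 : 0 < 1 + Real.sqrt t / x := by positivity
  have h2 : 0 < 1 + Real.sqrt t / y := by positivity
  positivity

lemma ptwise {a c t x y : ℝ} (ha0 : 0 ≤ a) (hc : 0 < c) (ht : 0 < t)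
    (hx : 0 < x) (hy : 0 < y) {z : ℝ} (hz : 0 < z) :
    Hker t a c x z * Hker t a c z y ≤
      Hker t a (4 * c) x y *
        ((1 / Real.sqrt t) * Real.exp (-((2 / (c * t)) * (z - (x + y) / 2) ^ 2)) *
          (1 + Real.sqrt t / z) ^ (2 * a)) := by
  have hs : 0 < Real.sqrt t := Real.sqrt_pos.mpr ht
  set s := Real.sqrt t with hsdef
  have hbx : (0:ℝ) < 1 + s / x := by positivity
  have hby : (0:ℝ) < 1 + s / y := by positivity
  have hbz : (0:ℝ) < 1 + s / z := by positivity
  have hPz : (1 + s / z) ^ a * (1 + s / z) ^ a = (1 + s / z) ^ (2 * a) := by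
    rw [← Real.rpow_add hbz]; ring_nf
  have hct : (0:ℝ) < c * t := by positivity
  have hexp : Real.exp (-((x - z) ^ 2 / (c * t))) * Real.exp (-((z - y) ^ 2 / (c * t))) ≤
      Real.exp (-((x - y) ^ 2 / (4 * c * t))) *
        Real.exp (-((2 / (c * t)) * (z - (x + y) / 2) ^ 2)) := by
    rw [← Real.exp_add, ← Real.exp_add, Real.exp_le_exp]
    have key : (x - y) ^ 2 / 4 + 2 * (z - (x + y) / 2) ^ 2 ≤ (x - z) ^ 2 + (z - y) ^ 2 := by
      nlinarith [sq_nonneg (x - y)]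
    have h1 : -((x - z) ^ 2 / (c * t)) + -((z - y) ^ 2 / (c * t))
        = -(((x - z) ^ 2 + (z - y) ^ 2) / (c * t)) := by ring
    have h2 : -((x - y) ^ 2 / (4 * c * t)) + -((2 / (c * t)) * (z - (x + y) / 2) ^ 2)
        = -(((x - y) ^ 2 / 4 + 2 * (z - (x + y) / 2) ^ 2) / (c * t)) := by
      field_simp; ring
    rw [h1, h2, neg_le_neg_iff]
    gcongr
  calc Hker t a c x z * Hker t a c z y
      = (1 / s * (1 / s)) * ((1 + s / x) ^ a * (1 + s / y) ^ a) *
          ((1 + s / z) ^ a * (1 + s / z) ^ a) *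
          (Real.exp (-((x - z) ^ 2 / (c * t))) * Real.exp (-((z - y) ^ 2 / (c * t)))) := by
        unfold Hker; ring
    _ ≤ (1 / s * (1 / s)) * ((1 + s / x) ^ a * (1 + s / y) ^ a) *
          ((1 + s / z) ^ a * (1 + s / z) ^ a) *
          (Real.exp (-((x - y) ^ 2 / (4 * c * t))) *
            Real.exp (-((2 / (c * t)) * (z - (x + y) / 2) ^ 2))) := by
        apply mul_le_mul_of_nonneg_left hexp
        positivity
    _ = Hker t a (4 * c) x y *
        ((1 / s) * Real.exp (-((2 / (c * t)) * (z - (x + y) / 2) ^ 2)) *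
          (1 + s / z) ^ (2 * a)) := by
        unfold Hker; rw [← hsdef, ← hPz]; ring_nf

lemma intbound {a c t : ℝ} (ha0 : 0 ≤ a) (ha : a < 1 / 2) (hc : 0 < c) (ht : 0 < t) (m : ℝ) :
    IntegrableOn (fun z : ℝ => (1 / Real.sqrt t) * Real.exp (-((2 / (c * t)) * (z - m) ^ 2)) *
        (1 + Real.sqrt t / z) ^ (2 * a)) (Set.Ioi 0) ∧
    (∫ z in Set.Ioi (0:ℝ), (1 / Real.sqrt t) * Real.exp (-((2 / (c * t)) * (z - m) ^ 2)) *
        (1 + Real.sqrt t / z) ^ (2 * a)) ≤ 2 / (1 - 2 * a) + 2 * Real.sqrt (π * c / 2) := by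
  have hs : 0 < Real.sqrt t := Real.sqrt_pos.mpr ht
  set s := Real.sqrt t with hsdef
  set p := 2 * a with hpdef
  have hp0 : 0 ≤ p := by positivity
  have hp1 : p < 1 := by rw [hpdef]; linarith
  set g : ℝ → ℝ := fun z => (1 / s) * Real.exp (-((2 / (c * t)) * (z - m) ^ 2)) *
      (1 + s / z) ^ p with hgdef
  have hgc : ContinuousOn g (Set.Ioi 0) := by
    apply ContinuousOn.mul
    · apply ContinuousOn.mul continuousOn_const
      exact (Continuous.continuousOn (by fun_prop))
    · apply ContinuousOn.rpow_const
      · exact continuousOn_const.add (continuousOn_const.div continuousOn_id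
          (fun z hz => ne_of_gt hz))
      · intro z hz
        right; exact hp0
  have hgnn : ∀ z ∈ Set.Ioi (0:ℝ), 0 ≤ g z := by
    intro z hz
    have hz0 : (0:ℝ) < z := hz
    have : (0:ℝ) < 1 + s / z := by positivity
    rw [hgdef]; positivity
  -- bound on Ioc 0 s
  set K : ℝ := (1 / s) * (2 * s) ^ p with hKdef
  have hKpos : 0 < K := by rw [hKdef]; positivity
  have hbd1 : ∀ z ∈ Set.Ioc (0:ℝ) s, g z ≤ K * z ^ (-p) := by
    intro z hz
    obtain ⟨hz0, hzs⟩ := hz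
    have hbz : (0:ℝ) < 1 + s / z := by positivity
    have h1 : 1 + s / z ≤ 2 * s / z := by
      have : (1:ℝ) ≤ s / z := (one_le_div hz0).mpr hzs
      rw [mul_div_assoc]; linarith
    have h2 : (1 + s / z) ^ p ≤ (2 * s / z) ^ p :=
      Real.rpow_le_rpow hbz.le h1 hp0
    have h3 : (2 * s / z) ^ p = (2 * s) ^ p * z ^ (-p) := by
      rw [Real.div_rpow (by positivity) hz0.le, Real.rpow_neg hz0.le, div_eq_mul_inv]
    have h4 : Real.exp (-((2 / (c * t)) * (z - m) ^ 2)) ≤ 1 := by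
      rw [Real.exp_le_one_iff]
      have : (0:ℝ) ≤ (2 / (c * t)) * (z - m) ^ 2 := by positivity
      linarith
    calc g z ≤ (1 / s) * 1 * ((2 * s) ^ p * z ^ (-p)) := by
          rw [hgdef]
          apply mul_le_mul (by
            apply mul_le_mul_of_nonneg_left h4 (by positivity)) (h3 ▸ h2) (by positivity) (by positivity)
      _ = K * z ^ (-p) := by rw [hKdef]; ring
  have hrpow_int : IntegrableOn (fun z : ℝ => z ^ (-p)) (Set.Ioc 0 s) := by
    have := (intervalIntegral.intervalIntegrable_rpow' (a := 0) (b := s)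
      (show (-1:ℝ) < -p by linarith)).1
    exact this
  have hbd1_int : IntegrableOn (fun z : ℝ => K * z ^ (-p)) (Set.Ioc 0 s) :=
    hrpow_int.const_mul K
  have hg_int1 : IntegrableOn g (Set.Ioc 0 s) := by
    apply Integrable.mono' hbd1_int
      ((hgc.mono Set.Ioc_subset_Ioi_self).aestronglyMeasurable measurableSet_Ioc)
    filter_upwards [ae_restrict_mem measurableSet_Ioc] with z hz
    rw [Real.norm_eq_abs, abs_of_nonneg (hgnn z (Set.Ioc_subset_Ioi_self hz))]
    exact hbd1 z hz
  -- value of the rpow integral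
  have hval : ∫ z in Set.Ioc (0:ℝ) s, K * z ^ (-p) = K * (s ^ (1 - p) / (1 - p)) := by
    rw [integral_const_mul]
    rw [← intervalIntegral.integral_of_le hs.le]
    rw [integral_rpow (Or.inl (by linarith : (-1:ℝ) < -p))]
    rw [Real.zero_rpow (by linarith : -p + 1 ≠ 0)]
    ring_nf
  have hKs : K * (s ^ (1 - p) / (1 - p)) ≤ 2 / (1 - p) := by
    have hmul : K * s ^ (1 - p) = (2:ℝ) ^ p := by
      rw [hKdef, Real.mul_rpow (by norm_num) hs.le]
      rw [show (1:ℝ)/s * ((2:ℝ)^p * s^p) * s^(1-p) = (2:ℝ)^p * (s^p * s^(1-p) / s) by ring]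
      rw [← Real.rpow_add hs, show p + (1 - p) = 1 by ring, Real.rpow_one]
      field_simp
    have h2p : (2:ℝ) ^ p ≤ 2 := by
      calc (2:ℝ) ^ p ≤ (2:ℝ) ^ (1:ℝ) :=
            Real.rpow_le_rpow_of_exponent_le (by norm_num) (by linarith)
        _ = 2 := Real.rpow_one 2
    have h1p : 0 < 1 - p := by linarith
    calc K * (s ^ (1 - p) / (1 - p)) = (K * s ^ (1 - p)) / (1 - p) := by ring
      _ = (2:ℝ) ^ p / (1 - p) := by rw [hmul]
      _ ≤ 2 / (1 - p) := by gcongr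
  have hpart1 : ∫ z in Set.Ioc (0:ℝ) s, g z ≤ 2 / (1 - p) := by
    calc ∫ z in Set.Ioc (0:ℝ) s, g z ≤ ∫ z in Set.Ioc (0:ℝ) s, K * z ^ (-p) :=
          setIntegral_mono_on hg_int1 hbd1_int measurableSet_Ioc hbd1
      _ = K * (s ^ (1 - p) / (1 - p)) := hval
      _ ≤ 2 / (1 - p) := hKs
  -- Ioi s part
  have hb : (0:ℝ) < 2 / (c * t) := by positivity
  have hgauss : Integrable (fun z : ℝ => Real.exp (-((2 / (c * t)) * (z - m) ^ 2))) := by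
    have h0 : Integrable (fun z : ℝ => Real.exp (-(2 / (c * t)) * z ^ 2)) :=
      integrable_exp_neg_mul_sq hb
    have := h0.comp_sub_right m
    simpa [neg_mul] using this
  have hb2_int : Integrable (fun z : ℝ => (2 / s) * Real.exp (-((2 / (c * t)) * (z - m) ^ 2))) :=
    hgauss.const_mul _
  have hbd2 : ∀ z ∈ Set.Ioi s, g z ≤ (2 / s) * Real.exp (-((2 / (c * t)) * (z - m) ^ 2)) := by
    intro z hz
    have hz0 : (0:ℝ) < z := lt_trans hs hz
    have hbz : (0:ℝ) < 1 + s / z := by positivity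
    have h1 : 1 + s / z ≤ 2 := by
      have : s / z ≤ 1 := (div_le_one hz0).mpr (le_of_lt hz)
      linarith
    have h2 : (1 + s / z) ^ p ≤ 2 := by
      calc (1 + s / z) ^ p ≤ (2:ℝ) ^ p := Real.rpow_le_rpow hbz.le h1 hp0
        _ ≤ (2:ℝ) ^ (1:ℝ) := Real.rpow_le_rpow_of_exponent_le (by norm_num) (by linarith)
        _ = 2 := Real.rpow_one 2
    rw [hgdef]
    calc (1 / s) * Real.exp (-((2 / (c * t)) * (z - m) ^ 2)) * (1 + s / z) ^ p
        ≤ (1 / s) * Real.exp (-((2 / (c * t)) * (z - m) ^ 2)) * 2 := by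
          apply mul_le_mul_of_nonneg_left h2 (by positivity)
      _ = (2 / s) * Real.exp (-((2 / (c * t)) * (z - m) ^ 2)) := by ring
  have hg_int2 : IntegrableOn g (Set.Ioi s) := by
    apply Integrable.mono' hb2_int.integrableOn
      ((hgc.mono (Set.Ioi_subset_Ioi hs.le)).aestronglyMeasurable measurableSet_Ioi)
    filter_upwards [ae_restrict_mem measurableSet_Ioi] with z hz
    rw [Real.norm_eq_abs, abs_of_nonneg (hgnn z (lt_trans hs hz))]
    exact hbd2 z hz
  have hgaussval : ∫ z : ℝ, Real.exp (-((2 / (c * t)) * (z - m) ^ 2))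
      = Real.sqrt (π * c / 2) * s := by
    have h1 : ∫ z : ℝ, Real.exp (-((2 / (c * t)) * (z - m) ^ 2))
        = ∫ z : ℝ, Real.exp (-(2 / (c * t)) * z ^ 2) := by
      rw [← integral_sub_right_eq_self (fun z : ℝ => Real.exp (-(2 / (c * t)) * z ^ 2)) m]
      simp [neg_mul]
    rw [h1, integral_gaussian]
    rw [show π / (2 / (c * t)) = (π * c / 2) * t by field_simp]
    rw [Real.sqrt_mul (by positivity) t]
  have hpart2 : ∫ z in Set.Ioi s, g z ≤ 2 * Real.sqrt (π * c / 2) := by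
    calc ∫ z in Set.Ioi s, g z
        ≤ ∫ z in Set.Ioi s, (2 / s) * Real.exp (-((2 / (c * t)) * (z - m) ^ 2)) :=
          setIntegral_mono_on hg_int2 hb2_int.integrableOn measurableSet_Ioi hbd2
      _ ≤ ∫ z : ℝ, (2 / s) * Real.exp (-((2 / (c * t)) * (z - m) ^ 2)) := by
          apply setIntegral_le_integral hb2_int
          filter_upwards with z
          positivity
      _ = (2 / s) * (Real.sqrt (π * c / 2) * s) := by
          rw [integral_const_mul, hgaussval]
      _ = 2 * Real.sqrt (π * c / 2) := by field_simp
  -- combine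
  have hunion : Set.Ioc (0:ℝ) s ∪ Set.Ioi s = Set.Ioi 0 := Set.Ioc_union_Ioi_eq_Ioi hs.le
  have hg_int : IntegrableOn g (Set.Ioi 0) := by
    rw [← hunion]
    exact hg_int1.union hg_int2
  refine ⟨hg_int, ?_⟩
  have hsplit : ∫ z in Set.Ioi (0:ℝ), g z
      = (∫ z in Set.Ioc (0:ℝ) s, g z) + ∫ z in Set.Ioi s, g z := by
    rw [← hunion]
    exact setIntegral_union (Set.Ioc_disjoint_Ioi le_rfl) measurableSet_Ioi hg_int1 hg_int2
  calc ∫ z in Set.Ioi (0:ℝ), g z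
      = (∫ z in Set.Ioc (0:ℝ) s, g z) + ∫ z in Set.Ioi s, g z := hsplit
    _ ≤ 2 / (1 - p) + 2 * Real.sqrt (π * c / 2) := add_le_add hpart1 hpart2
    _ = 2 / (1 - 2 * a) + 2 * Real.sqrt (π * c / 2) := by rw [hpdef]

/-- for `a ∈ [0,1/2)` and `c > 0` there is `C > 0` (depending only on `a` and `c`)
such that `∫₀^∞ H_{t,a,c}(x,z) H_{t,a,c}(z,y) dz ≤ C · H_{t,a,4c}(x,y)` for all `t, x, y > 0`. -/
theorem statement0 (a c : ℝ) (ha0 : 0 ≤ a) (ha : a < 1 / 2) (hc : 0 < c) :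
    ∃ C : ℝ, 0 < C ∧ ∀ t : ℝ, 0 < t → ∀ x : ℝ, 0 < x → ∀ y : ℝ, 0 < y →
      (∫ z in Set.Ioi (0 : ℝ), Hker t a c x z * Hker t a c z y) ≤ C * Hker t a (4 * c) x y := by
  refine ⟨2 / (1 - 2 * a) + 2 * Real.sqrt (π * c / 2), ?_, ?_⟩
  · have h1 : (0:ℝ) < 1 - 2 * a := by linarith
    positivity
  intro t ht x hx y hy
  obtain ⟨hg_int, hg_bd⟩ := intbound ha0 ha hc ht ((x + y) / 2)
  have hH : 0 < Hker t a (4 * c) x y := hker_pos ht hx hy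
  have step1 : (∫ z in Set.Ioi (0:ℝ), Hker t a c x z * Hker t a c z y) ≤
      ∫ z in Set.Ioi (0:ℝ), Hker t a (4 * c) x y *
        ((1 / Real.sqrt t) * Real.exp (-((2 / (c * t)) * (z - (x + y) / 2) ^ 2)) *
          (1 + Real.sqrt t / z) ^ (2 * a)) := by
    apply integral_mono_of_nonneg
    · filter_upwards [ae_restrict_mem measurableSet_Ioi] with z hz
      exact le_of_lt (mul_pos (hker_pos ht hx hz) (hker_pos ht hz hy))
    · exact hg_int.const_mul _
    · filter_upwards [ae_restrict_mem measurableSet_Ioi] with z hz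
      exact ptwise ha0 hc ht hx hy hz
  calc (∫ z in Set.Ioi (0:ℝ), Hker t a c x z * Hker t a c z y)
      ≤ ∫ z in Set.Ioi (0:ℝ), Hker t a (4 * c) x y *
        ((1 / Real.sqrt t) * Real.exp (-((2 / (c * t)) * (z - (x + y) / 2) ^ 2)) *
          (1 + Real.sqrt t / z) ^ (2 * a)) := step1
    _ = Hker t a (4 * c) x y * ∫ z in Set.Ioi (0:ℝ),
        ((1 / Real.sqrt t) * Real.exp (-((2 / (c * t)) * (z - (x + y) / 2) ^ 2)) *
          (1 + Real.sqrt t / z) ^ (2 * a)) := integral_const_mul _ _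
    _ ≤ Hker t a (4 * c) x y * (2 / (1 - 2 * a) + 2 * Real.sqrt (π * c / 2)) :=
        mul_le_mul_of_nonneg_left hg_bd hH.le
    _ = (2 / (1 - 2 * a) + 2 * Real.sqrt (π * c / 2)) * Hker t a (4 * c) x y := mul_comm _ _
end

section
/- For every α > −1 and every z > 0, one has |I_α(z) − I_{α+1}(z)| < (4α + 6) · I_{α+1}(z)/z. -/
open Real

/-- The modified Bessel function of imaginary argument
`I_α(z) = ∑_{k=0}^∞ (z/2)^{α+2k} / (k! Γ(α+k+1))`. -/
noncomputable def besselI (ν z : ℝ) : ℝ :=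
  ∑' k : ℕ, (z / 2) ^ (ν + 2 * (k : ℝ)) / ((k.factorial : ℝ) * Real.Gamma (ν + (k : ℝ) + 1))

section Aux
open Finset

namespace BesselAux

/-- coefficient function -/
noncomputable def G (ν u : ℝ) (k : ℕ) : ℝ :=
  u ^ k / ((k.factorial : ℝ) * Real.Gamma (ν + (k : ℝ) + 1))

lemma Gamma_arg_pos (ν : ℝ) (hν : -1 < ν) (k : ℕ) : 0 < ν + (k : ℝ) + 1 := by
  have : (0:ℝ) ≤ k := Nat.cast_nonneg k
  linarith

lemma Gpos {ν u : ℝ} (hν : -1 < ν) (hu : 0 < u) (k : ℕ) : 0 < G ν u k := by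
  have h1 := Real.Gamma_pos_of_pos (Gamma_arg_pos ν hν k)
  have h2 : (0:ℝ) < k.factorial := by exact_mod_cast k.factorial_pos
  exact div_pos (pow_pos hu k) (mul_pos h2 h1)

lemma Gsucc {ν u : ℝ} (hν : -1 < ν) (k : ℕ) :
    G ν u (k + 1) = G ν u k * (u / ((k + 1) * (ν + (k:ℝ) + 1))) := by
  have hpos := Gamma_arg_pos ν hν k
  have hΓ : Real.Gamma (ν + (k:ℝ) + 1 + 1) = (ν + (k:ℝ) + 1) * Real.Gamma (ν + (k:ℝ) + 1) :=
    Real.Gamma_add_one hpos.ne'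
  have harg : ν + ((k:ℝ) + 1) + 1 = ν + (k:ℝ) + 1 + 1 := by ring
  have h1 := Real.Gamma_pos_of_pos hpos
  have h2 : (0:ℝ) < k.factorial := by exact_mod_cast k.factorial_pos
  simp only [G, Nat.factorial_succ, Nat.cast_mul, Nat.cast_add, Nat.cast_one, harg, hΓ, pow_succ]
  field_simp

lemma Gsum {ν u : ℝ} (hν : -1 < ν) (hu : 0 < u) : Summable (G ν u) := by
  apply summable_of_ratio_norm_eventually_le (r := 1/2) (by norm_num)
  rw [Filter.eventually_atTop]
  refine ⟨⌈2*u⌉₊, fun k hk => ?_⟩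
  have hk2 : 2*u ≤ (k:ℝ) := le_trans (Nat.le_ceil _) (by exact_mod_cast hk)
  have hGk := Gpos hν hu k
  have hpos := Gamma_arg_pos ν hν k
  rw [Gsucc hν k, norm_mul, Real.norm_eq_abs, Real.norm_eq_abs, abs_of_pos hGk, mul_comm]
  have hknn : (0:ℝ) < (k:ℝ)+1 := by positivity
  have hratio : u / ((k + 1) * (ν + (k:ℝ) + 1)) ≤ 1/2 := by
    rw [div_le_iff₀ (by positivity)]
    have h1 : 2*u ≤ ν + (k:ℝ) + 1 := by linarith
    nlinarith
  have : |u / ((k + 1) * (ν + (k:ℝ) + 1))| = u / ((k + 1) * (ν + (k:ℝ) + 1)) := by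
    rw [abs_of_pos]; positivity
  rw [this]
  exact mul_le_mul_of_nonneg_right hratio hGk.le

noncomputable def F (ν u : ℝ) : ℝ := ∑' k, G ν u k

lemma Fpos {ν u : ℝ} (hν : -1 < ν) (hu : 0 < u) : 0 < F ν u :=
  Summable.tsum_pos (Gsum hν hu) (fun k => (Gpos hν hu k).le) 0 (Gpos hν hu 0)

lemma Gzero_rec (ν u : ℝ) (hν : -1 < ν) : G ν u 0 = (ν + 1) * G (ν + 1) u 0 := by
  have h0 : ν + 1 ≠ 0 := by linarith
  have harg : ν + 1 + ((0:ℕ):ℝ) + 1 = (ν + 1) + 1 := by push_cast; ring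
  have harg2 : ν + ((0:ℕ):ℝ) + 1 = ν + 1 := by push_cast; ring
  simp only [G, harg, harg2, Real.Gamma_add_one h0]
  have hΓ : Real.Gamma (ν+1) ≠ 0 := (Real.Gamma_pos_of_pos (by linarith)).ne'
  field_simp

lemma Gsucc_rec (ν u : ℝ) (hν : -1 < ν) (k : ℕ) :
    G ν u (k + 1) = (ν + 1) * G (ν + 1) u (k + 1) + u * G (ν + 2) u k := by
  have hw : (0:ℝ) < ν + (k:ℝ) + 2 := by
    have : (0:ℝ) ≤ k := Nat.cast_nonneg k
    linarith
  have hG1 : Real.Gamma (ν + ((k+1 : ℕ):ℝ) + 1) = Real.Gamma (ν + (k:ℝ) + 2) := by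
    rw [show ν + ((k+1 : ℕ):ℝ) + 1 = ν + (k:ℝ) + 2 by push_cast; ring]
  have hG2 : Real.Gamma (ν + 1 + ((k+1 : ℕ):ℝ) + 1)
      = (ν + (k:ℝ) + 2) * Real.Gamma (ν + (k:ℝ) + 2) := by
    rw [show ν + 1 + ((k+1 : ℕ):ℝ) + 1 = (ν + (k:ℝ) + 2) + 1 by push_cast; ring,
      Real.Gamma_add_one hw.ne']
  have hG3 : Real.Gamma (ν + 2 + (k:ℝ) + 1)
      = (ν + (k:ℝ) + 2) * Real.Gamma (ν + (k:ℝ) + 2) := by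
    rw [show ν + 2 + (k:ℝ) + 1 = (ν + (k:ℝ) + 2) + 1 by ring, Real.Gamma_add_one hw.ne']
  have hΓ : Real.Gamma (ν + (k:ℝ) + 2) ≠ 0 := (Real.Gamma_pos_of_pos hw).ne'
  have hf : ((k.factorial : ℝ)) ≠ 0 := by exact_mod_cast k.factorial_pos.ne'
  have hk1 : ((k:ℝ) + 1) ≠ 0 := by positivity
  simp only [G]
  rw [hG1, hG2, hG3, Nat.factorial_succ]
  push_cast
  rw [pow_succ]
  field_simp
  ring

lemma Frec (ν u : ℝ) (hν : -1 < ν) (hu : 0 < u) :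
    F ν u = (ν + 1) * F (ν + 1) u + u * F (ν + 2) u := by
  have hν1 : -1 < ν + 1 := by linarith
  have hν2 : -1 < ν + 2 := by linarith
  have hs := Gsum (u := u) hν hu
  have hs1 := Gsum (u := u) hν1 hu
  have hs2 := Gsum (u := u) hν2 hu
  have hs1' : Summable (fun k => G (ν+1) u (k+1)) := by
    exact (summable_nat_add_iff 1).2 hs1
  calc F ν u = ∑' k, G ν u k := rfl
    _ = G ν u 0 + ∑' k, G ν u (k+1) := Summable.tsum_eq_zero_add hs
    _ = (ν+1) * G (ν+1) u 0 + ∑' k, ((ν + 1) * G (ν + 1) u (k + 1) + u * G (ν + 2) u k) := by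
        rw [Gzero_rec ν u hν]
        congr 1
        exact tsum_congr fun k => Gsucc_rec ν u hν k
    _ = (ν+1) * G (ν+1) u 0 + ((ν+1) * ∑' k, G (ν + 1) u (k + 1) + u * ∑' k, G (ν + 2) u k) := by
        rw [Summable.tsum_add (hs1'.mul_left _) (hs2.mul_left _), tsum_mul_left, tsum_mul_left]
    _ = (ν + 1) * F (ν + 1) u + u * F (ν + 2) u := by
        rw [F, F, Summable.tsum_eq_zero_add hs1]; ring

lemma pair_eq (ν u : ℝ) (hν : -1 < ν) (n i : ℕ) (hin : i ≤ n) :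
    G (ν+1) u i * G (ν+1) u (n-i) - G ν u i * G (ν+2) u (n-i)
      = u ^ n * (((n:ℝ) + 1 - 2*(i:ℝ)) /
        ((i.factorial : ℝ) * (((n-i).factorial : ℝ)) * Real.Gamma (ν + (i:ℝ) + 2)
          * Real.Gamma (ν + ((n:ℝ) - (i:ℝ)) + 3))) := by
  have hm : ((n-i : ℕ) : ℝ) = (n:ℝ) - (i:ℝ) := by
    push_cast [Nat.cast_sub hin]; ring
  have hmn : (0:ℝ) ≤ (n:ℝ) - (i:ℝ) := by
    have := (Nat.cast_le (α := ℝ)).2 hin; linarith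
  have hi0 : (0:ℝ) ≤ (i:ℝ) := Nat.cast_nonneg i
  have hA : (0:ℝ) < ν + (i:ℝ) + 1 := by linarith
  have hB : (0:ℝ) < ν + ((n:ℝ) - (i:ℝ)) + 2 := by linarith
  have hG1 : Real.Gamma (ν + 1 + (i:ℝ) + 1) = (ν + (i:ℝ) + 1) * Real.Gamma (ν + (i:ℝ) + 1) := by
    rw [show ν + 1 + (i:ℝ) + 1 = (ν + (i:ℝ) + 1) + 1 by ring, Real.Gamma_add_one hA.ne']
  have hG2 : Real.Gamma (ν + 1 + (((n-i):ℕ):ℝ) + 1) = Real.Gamma (ν + ((n:ℝ) - (i:ℝ)) + 2) := by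
    rw [hm, show ν + 1 + ((n:ℝ) - (i:ℝ)) + 1 = ν + ((n:ℝ) - (i:ℝ)) + 2 by ring]
  have hG3 : Real.Gamma (ν + 2 + (((n-i):ℕ):ℝ) + 1)
      = (ν + ((n:ℝ) - (i:ℝ)) + 2) * Real.Gamma (ν + ((n:ℝ) - (i:ℝ)) + 2) := by
    rw [hm, show ν + 2 + ((n:ℝ) - (i:ℝ)) + 1 = (ν + ((n:ℝ) - (i:ℝ)) + 2) + 1 by ring,
      Real.Gamma_add_one hB.ne']
  have hG4 : Real.Gamma (ν + (i:ℝ) + 2) = (ν + (i:ℝ) + 1) * Real.Gamma (ν + (i:ℝ) + 1) := by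
    rw [show ν + (i:ℝ) + 2 = (ν + (i:ℝ) + 1) + 1 by ring, Real.Gamma_add_one hA.ne']
  have hG5 : Real.Gamma (ν + ((n:ℝ) - (i:ℝ)) + 3)
      = (ν + ((n:ℝ) - (i:ℝ)) + 2) * Real.Gamma (ν + ((n:ℝ) - (i:ℝ)) + 2) := by
    rw [show ν + ((n:ℝ) - (i:ℝ)) + 3 = (ν + ((n:ℝ) - (i:ℝ)) + 2) + 1 by ring,
      Real.Gamma_add_one hB.ne']
  have hpu : u ^ i * u ^ (n-i) = u ^ n := by
    rw [← pow_add, Nat.add_sub_cancel' hin]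
  have hΓA : Real.Gamma (ν + (i:ℝ) + 1) ≠ 0 := (Real.Gamma_pos_of_pos hA).ne'
  have hΓB : Real.Gamma (ν + ((n:ℝ) - (i:ℝ)) + 2) ≠ 0 := (Real.Gamma_pos_of_pos hB).ne'
  have hfi : ((i.factorial : ℝ)) ≠ 0 := by exact_mod_cast i.factorial_pos.ne'
  have hfm : (((n-i).factorial : ℝ)) ≠ 0 := by exact_mod_cast (n-i).factorial_pos.ne'
  simp only [G]
  rw [hG1, hG2, hG3, hG4, hG5]
  rw [div_mul_div_comm, div_mul_div_comm, hpu]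
  field_simp
  ring

lemma keyN (ν u : ℝ) (hν : -1 < ν) (hu : 0 < u) (n : ℕ) :
    ∑ i ∈ range (n+1), G ν u i * G (ν+2) u (n-i)
      ≤ ∑ i ∈ range (n+1), G (ν+1) u i * G (ν+1) u (n-i) := by
  rw [← sub_nonneg, ← Finset.sum_sub_distrib]
  set h : ℕ → ℝ := fun i => (((n:ℝ) + 1 - 2*(i:ℝ)) /
        ((i.factorial : ℝ) * (((n-i).factorial : ℝ)) * Real.Gamma (ν + (i:ℝ) + 2)
          * Real.Gamma (ν + ((n:ℝ) - (i:ℝ)) + 3))) with hh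
  have step : ∀ i ∈ range (n+1),
      G (ν+1) u i * G (ν+1) u (n-i) - G ν u i * G (ν+2) u (n-i) = u ^ n * h i := by
    intro i hi
    exact pair_eq ν u hν n i (Nat.lt_succ_iff.mp (Finset.mem_range.mp hi))
  rw [Finset.sum_congr rfl step, ← Finset.mul_sum]
  apply mul_nonneg (pow_nonneg hu.le n)
  have hA : ∀ m : ℕ, (0:ℝ) < Real.Gamma (ν + (m:ℝ) + 2) := by
    intro m
    apply Real.Gamma_pos_of_pos
    have : (0:ℝ) ≤ (m:ℝ) := Nat.cast_nonneg m
    linarith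
  have hApos : ∀ r : ℝ, 0 ≤ r → (0:ℝ) < Real.Gamma (ν + r + 2) := by
    intro r hr; apply Real.Gamma_pos_of_pos; linarith
  have hBpos : ∀ r : ℝ, 0 ≤ r → (0:ℝ) < Real.Gamma (ν + r + 3) := by
    intro r hr; apply Real.Gamma_pos_of_pos; linarith
  rw [Finset.sum_range_succ']
  -- the i = 0 term
  have h0 : 0 ≤ h 0 := by
    rw [hh]
    simp only [Nat.cast_zero, mul_zero, sub_zero, Nat.sub_zero, Nat.factorial_zero,
      Nat.cast_one, one_mul, add_zero]
    have c1 : (0:ℝ) < Real.Gamma (ν + 0 + 2) := hApos 0 le_rfl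
    have c2 : (0:ℝ) < Real.Gamma (ν + (n:ℝ) + 3) := hBpos _ (Nat.cast_nonneg n)
    have hfn : (0:ℝ) < (n.factorial : ℝ) := by exact_mod_cast n.factorial_pos
    rw [add_zero] at c1
    apply div_nonneg (by positivity)
    exact le_of_lt (mul_pos (mul_pos hfn c1) c2)
  -- the paired terms
  have hpair : ∀ i ∈ range n, 0 ≤ h (i+1) + h (n-i) := by
    intro i hi
    have hin : i < n := Finset.mem_range.mp hi
    have hnats : n - (n-i) = i := by omega
    have hc2 : (((n - i) : ℕ) : ℝ) = (n:ℝ) - (i:ℝ) := by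
      push_cast [Nat.cast_sub hin.le]; ring
    have hcs : (((i+1) : ℕ) : ℝ) = (i:ℝ) + 1 := by push_cast; ring
    have hilt : (i:ℝ) + 1 ≤ (n:ℝ) := by exact_mod_cast hin
    have hf1 : (((i+1).factorial : ℝ)) = ((i:ℝ)+1) * (i.factorial : ℝ) := by
      rw [Nat.factorial_succ]; push_cast; ring
    have hf2 : (((n-i).factorial : ℝ)) = ((n:ℝ)-(i:ℝ)) * ((n-(i+1)).factorial : ℝ) := by
      have e : n - i = (n-(i+1)) + 1 := by omega
      rw [e, Nat.factorial_succ, Nat.cast_mul]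
      rw [show (((n-(i+1))+1 : ℕ):ℝ) = (n:ℝ)-(i:ℝ) by
        push_cast [Nat.cast_sub (show i+1 ≤ n by omega)]; ring]
    -- closed form for the pair sum
    have key : h (i+1) + h (n-i)
        = ((n:ℝ) - 1 - 2*(i:ℝ))^2 /
          ((((i:ℝ)+1) * (i.factorial : ℝ)) * ((((n:ℝ)-(i:ℝ)) * ((n-(i+1)).factorial : ℝ)))
            * (Real.Gamma (ν + (i:ℝ) + 3) * Real.Gamma (ν + ((n:ℝ)-(i:ℝ)) + 2))) := by
      rw [hh]
      simp only
      rw [hnats, hcs, hc2, hf1, hf2]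
      rw [show ν + ((i:ℝ)+1) + 2 = ν + (i:ℝ) + 3 by ring]
      rw [show ν + ((n:ℝ) - ((i:ℝ)+1)) + 3 = ν + ((n:ℝ)-(i:ℝ)) + 2 by ring]
      rw [show ν + ((n:ℝ) - ((n:ℝ)-(i:ℝ))) + 3 = ν + (i:ℝ) + 3 by ring]
      have hq : (0:ℝ) < (n:ℝ) - (i:ℝ) := by linarith
      have hp : (0:ℝ) < (i:ℝ) + 1 := by positivity
      have hfi : ((i.factorial : ℝ)) ≠ 0 := by exact_mod_cast i.factorial_pos.ne'
      have hfn : (((n-(i+1)).factorial : ℝ)) ≠ 0 := by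
        exact_mod_cast (n-(i+1)).factorial_pos.ne'
      have hGA : Real.Gamma (ν + (i:ℝ) + 3) ≠ 0 := by
        refine (Real.Gamma_pos_of_pos ?_).ne'
        have : (0:ℝ) ≤ (i:ℝ) := Nat.cast_nonneg i
        linarith
      have hGB : Real.Gamma (ν + ((n:ℝ)-(i:ℝ)) + 2) ≠ 0 := (hApos _ hq.le).ne'
      field_simp
      ring
    rw [key]
    apply div_nonneg (sq_nonneg _)
    have hq : (0:ℝ) < (n:ℝ) - (i:ℝ) := by
      have : (i:ℝ) + 1 ≤ (n:ℝ) := by exact_mod_cast hin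
      linarith
    have c1 : (0:ℝ) < Real.Gamma (ν + (i:ℝ) + 3) := by
      apply Real.Gamma_pos_of_pos
      have : (0:ℝ) ≤ (i:ℝ) := Nat.cast_nonneg i
      linarith
    have c2 : (0:ℝ) < Real.Gamma (ν + ((n:ℝ)-(i:ℝ)) + 2) := hApos _ hq.le
    have hfi : (0:ℝ) < (i.factorial : ℝ) := by exact_mod_cast i.factorial_pos
    have hfn : (0:ℝ) < ((n-(i+1)).factorial : ℝ) := by exact_mod_cast (n-(i+1)).factorial_pos
    have hp : (0:ℝ) < (i:ℝ) + 1 := by positivity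
    positivity
  -- reflect and combine
  have hrefl : ∑ i ∈ range n, h (i+1) = ∑ i ∈ range n, h (n-i) := by
    rw [← Finset.sum_range_reflect (fun i => h (i+1)) n]
    apply Finset.sum_congr rfl
    intro j hj
    have hjn : j < n := Finset.mem_range.mp hj
    have : n - 1 - j + 1 = n - j := by omega
    simp only [this]
  have h2 : 0 ≤ ∑ i ∈ range n, (h (i+1) + h (n-i)) := Finset.sum_nonneg hpair
  rw [Finset.sum_add_distrib, ← hrefl] at h2
  linarith

lemma turan (ν u : ℝ) (hν : -1 < ν) (hu : 0 < u) :
    F ν u * F (ν+2) u ≤ F (ν+1) u ^ 2 := by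
  have hν1 : -1 < ν + 1 := by linarith
  have hν2 : -1 < ν + 2 := by linarith
  have hna : Summable fun k => ‖G ν u k‖ := by
    simpa [Real.norm_eq_abs] using (Gsum hν hu).abs
  have hnb : Summable fun k => ‖G (ν+1) u k‖ := by
    simpa [Real.norm_eq_abs] using (Gsum hν1 hu).abs
  have hnc : Summable fun k => ‖G (ν+2) u k‖ := by
    simpa [Real.norm_eq_abs] using (Gsum hν2 hu).abs
  have e1 : F ν u * F (ν+2) u
      = ∑' n, ∑ i ∈ range (n+1), G ν u i * G (ν+2) u (n-i) :=
    tsum_mul_tsum_eq_tsum_sum_range_of_summable_norm hna hnc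
  have e2 : F (ν+1) u ^ 2
      = ∑' n, ∑ i ∈ range (n+1), G (ν+1) u i * G (ν+1) u (n-i) := by
    rw [sq]
    exact tsum_mul_tsum_eq_tsum_sum_range_of_summable_norm hnb hnb
  rw [e1, e2]
  exact Summable.tsum_le_tsum (keyN ν u hν hu)
    (hasSum_sum_range_mul_of_summable_norm hna hnc).summable
    (hasSum_sum_range_mul_of_summable_norm hnb hnb).summable

lemma ratio_lb {X Y c t : ℝ} (hX : 0 < X) (hY : 0 < Y) (ht : 0 < t) (hc : 0 < c)
    (h : X^2 ≤ c*X*Y + t^2*Y^2) : 2*t*X - c*X < 2*t^2*Y := by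
  have hQ : 0 < 2*t^2*Y + c*X + 2*t*X := by positivity
  nlinarith [mul_pos (mul_pos hc hc) (mul_pos hX hX), mul_pos ht ht]

lemma central (α t u x1 x2 x3 x4 : ℝ) (hα : -1 < α) (ht : 0 < t) (hu : u = t^2)
    (P1 : 0 < x1) (P2 : 0 < x2) (P3 : 0 < x3) (P4 : 0 < x4)
    (e1 : x1 = (α+2) * x2 + u * x3) (e2 : x2 = (α+3) * x3 + u * x4)
    (T1 : x1 * x3 ≤ x2^2) (T2 : x2 * x4 ≤ x3^2) :
    |(α+1)*x1 + u*x2 - t*x1| < (2*α+3)*x1 := by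
  subst hu
  have hq1 : x1^2 ≤ (α+2)*x1*x2 + t^2*x2^2 := by nlinarith [e1, T1]
  have hq2 : x2^2 ≤ (α+3)*x2*x3 + t^2*x3^2 := by nlinarith [e2, T2]
  have QB : 2*t*x1 - (α+2)*x1 < 2*t^2*x2 := ratio_lb P1 P2 ht (by linarith) hq1
  have QC : 2*t*x2 - (α+3)*x2 < 2*t^2*x3 := ratio_lb P2 P3 ht (by linarith) hq2
  have Pmono : t * x2 < x1 := by nlinarith [e1, QC, P2]
  rw [abs_lt]
  constructor
  · have h5 : 0 < 5*α + 6 := by linarith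
    nlinarith [QB, mul_pos h5 P1]
  · have : t^2 * x2 < t * x1 := by nlinarith [Pmono]
    nlinarith [P1]

lemma besselI_eq (ν z : ℝ) (hz : 0 < z) :
    besselI ν z = (z/2) ^ ν * F ν ((z/2)^2) := by
  have ht : 0 < z/2 := by linarith
  rw [besselI, F]
  rw [← tsum_mul_left]
  apply tsum_congr
  intro k
  rw [G, Real.rpow_add ht, show (2*(k:ℝ)) = ((2*k : ℕ):ℝ) by push_cast; ring,
    Real.rpow_natCast, pow_mul, mul_div_assoc]

end BesselAux

end Aux

open BesselAux

/-- for every `α > -1` and every `z > 0`,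
`|I_α(z) − I_{α+1}(z)| < (4α+6) I_{α+1}(z) / z`. -/
theorem statement1 (α : ℝ) (hα : -1 < α) (z : ℝ) (hz : 0 < z) :
    |besselI α z - besselI (α + 1) z| < (4 * α + 6) * besselI (α + 1) z / z := by
  have ht : 0 < z/2 := by positivity
  have hu : 0 < (z/2)^2 := by positivity
  have hα1 : -1 < α + 1 := by linarith
  have hα2 : -1 < α + 2 := by linarith
  have hα3 : -1 < α + 3 := by linarith
  have e0 : F α ((z/2)^2) = (α+1) * F (α+1) ((z/2)^2) + (z/2)^2 * F (α+2) ((z/2)^2) :=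
    Frec α _ hα hu
  have e1 : F (α+1) ((z/2)^2) = (α+2) * F (α+2) ((z/2)^2) + (z/2)^2 * F (α+3) ((z/2)^2) := by
    have := Frec (α+1) ((z/2)^2) hα1 hu
    rw [show α + 1 + 1 = α + 2 by ring, show α + 1 + 2 = α + 3 by ring] at this
    exact this
  have e2 : F (α+2) ((z/2)^2) = (α+3) * F (α+3) ((z/2)^2) + (z/2)^2 * F (α+4) ((z/2)^2) := by
    have := Frec (α+2) ((z/2)^2) hα2 hu
    rw [show α + 2 + 1 = α + 3 by ring, show α + 2 + 2 = α + 4 by ring] at this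
    exact this
  have T1 : F (α+1) ((z/2)^2) * F (α+3) ((z/2)^2) ≤ F (α+2) ((z/2)^2) ^ 2 := by
    have := turan (α+1) ((z/2)^2) hα1 hu
    rw [show α + 1 + 1 = α + 2 by ring, show α + 1 + 2 = α + 3 by ring] at this
    exact this
  have T2 : F (α+2) ((z/2)^2) * F (α+4) ((z/2)^2) ≤ F (α+3) ((z/2)^2) ^ 2 := by
    have := turan (α+2) ((z/2)^2) hα2 hu
    rw [show α + 2 + 1 = α + 3 by ring, show α + 2 + 2 = α + 4 by ring] at this
    exact this
  have key := central α (z/2) ((z/2)^2) (F (α+1) ((z/2)^2)) (F (α+2) ((z/2)^2))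
    (F (α+3) ((z/2)^2)) (F (α+4) ((z/2)^2)) hα ht rfl
    (Fpos hα1 hu) (Fpos hα2 hu) (Fpos hα3 hu) (Fpos (by linarith) hu)
    e1 e2 T1 T2
  have hP : 0 < (z/2) ^ α := Real.rpow_pos_of_pos ht α
  have hb0 : besselI α z
      = (z/2) ^ α * ((α+1) * F (α+1) ((z/2)^2) + (z/2)^2 * F (α+2) ((z/2)^2)) := by
    rw [besselI_eq α z hz, e0]
  have hb1 : besselI (α+1) z = (z/2) ^ α * ((z/2) * F (α+1) ((z/2)^2)) := by
    rw [besselI_eq (α+1) z hz, Real.rpow_add ht, Real.rpow_one]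
    ring
  rw [hb0, hb1]
  have hRHS : (4*α+6) * ((z/2) ^ α * ((z/2) * F (α+1) ((z/2)^2))) / z
      = (z/2) ^ α * ((2*α+3) * F (α+1) ((z/2)^2)) := by
    field_simp
    ring
  rw [hRHS, show (z/2) ^ α * ((α+1) * F (α+1) ((z/2)^2) + (z/2)^2 * F (α+2) ((z/2)^2))
        - (z/2) ^ α * ((z/2) * F (α+1) ((z/2)^2))
      = (z/2) ^ α * ((α+1) * F (α+1) ((z/2)^2) + (z/2)^2 * F (α+2) ((z/2)^2)
        - (z/2) * F (α+1) ((z/2)^2)) by ring, abs_mul, abs_of_pos hP]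
  exact mul_lt_mul_of_pos_left key hP
end

section
/- Let α > −1. Then there exists a constant C > 0, depending only on α, such that for all t > 0 and x, y > 0, |p_t^α(x,y) − p_t^{α+1}(x,y)| ≤ C · ((1−r)/(2 r^{1/2} x y)) · p_t^{α+1}(x,y), where r = e^{−4t}. -/
open MeasureTheory Real Set ENNReal

/-- The one-dimensional Laguerre heat kernel
`p_t^ν(x,y) = (2(rxy)^{1/2}/(1−r)) exp(−(1/2)((1+r)/(1−r))(x²+y²)) I_ν((2r^{1/2}/(1−r))xy)`,
where `r = e^{−4t}`. -/
noncomputable def laguerreHeat (ν t x y : ℝ) : ℝ :=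
  2 * Real.sqrt (Real.exp (-(4 * t)) * x * y) / (1 - Real.exp (-(4 * t))) *
    Real.exp (-(1 / 2) * ((1 + Real.exp (-(4 * t))) / (1 - Real.exp (-(4 * t)))) *
      (x ^ 2 + y ^ 2)) *
    besselI ν (2 * Real.sqrt (Real.exp (-(4 * t))) / (1 - Real.exp (-(4 * t))) * (x * y))

lemma gamma_lower (b : ℝ) (hb : 0 < b) : ∀ k : ℕ, Real.Gamma b * b ^ k ≤ Real.Gamma (b + k)
  | 0 => by simp
  | (k+1) => by
      have h1 : (0:ℝ) < b + k := by positivity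
      have h2 : Real.Gamma (b + (k+1:ℕ)) = (b + k) * Real.Gamma (b + k) := by
        rw [show (b + (k+1:ℕ) : ℝ) = (b + k) + 1 by push_cast; ring, Real.Gamma_add_one h1.ne']
      rw [h2]
      have hGb := Real.Gamma_pos_of_pos hb
      calc Real.Gamma b * b ^ (k+1) = b * (Real.Gamma b * b ^ k) := by ring
        _ ≤ (b + k) * (Real.Gamma b * b ^ k) := by
            have hk : b ≤ b + k := le_add_of_nonneg_right (Nat.cast_nonneg k)
            have : (0:ℝ) ≤ Real.Gamma b * b ^ k := by positivity
            nlinarith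
        _ ≤ (b + k) * Real.Gamma (b + k) := by
            have := gamma_lower b hb k
            nlinarith
lemma summable_master (b : ℝ) (hb : 0 < b) (u : ℝ) (hu : 0 < u) (s e d : ℝ)
    (he : 0 ≤ e) (hd : 0 ≤ d) :
    Summable (fun k : ℕ => (e * k + d) * u ^ (s + 2 * (k:ℝ)) / (k.factorial * Real.Gamma (b + k))) := by
  have hGb := Real.Gamma_pos_of_pos hb
  have hsum : Summable (fun k : ℕ =>
      ((e+d) * u ^ s / Real.Gamma b) * ((2*u^2/b)^k / k.factorial)) :=
    (Real.summable_pow_div_factorial (2*u^2/b)).mul_left _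
  refine Summable.of_nonneg_of_le (fun k => ?_) (fun k => ?_) hsum
  · have h1 : (0:ℝ) < b + k := by positivity
    have := Real.Gamma_pos_of_pos h1
    have : (0:ℝ) ≤ e * k + d := by positivity
    positivity
  · have h1 : (0:ℝ) < b + k := by positivity
    have hG := Real.Gamma_pos_of_pos h1
    have hglb := gamma_lower b hb k
    have hfac : (0:ℝ) < k.factorial := by exact_mod_cast k.factorial_pos
    have hrpow : u ^ (s + 2 * (k:ℝ)) = u ^ s * (u^2)^k := by
      rw [Real.rpow_add hu, ← Real.rpow_natCast (u^2) k, ← Real.rpow_natCast u 2,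
        ← Real.rpow_mul hu.le]
      norm_num [mul_comm]
    have hcoef : e * k + d ≤ (e + d) * 2 ^ k := by
      have h2 : (k:ℝ) ≤ 2 ^ k := by
        exact_mod_cast (Nat.lt_two_pow_self (n := k)).le
      have h3 : (1:ℝ) ≤ 2 ^ k := one_le_pow₀ (by norm_num)
      nlinarith
    rw [hrpow]
    have hupos : (0:ℝ) < u ^ s := Real.rpow_pos_of_pos hu s
    have husq : (0:ℝ) < (u^2)^k := by positivity
    have hbk : (0:ℝ) < b ^ k := by positivity
    have key : (e * k + d) * (u ^ s * (u^2)^k) / (k.factorial * Real.Gamma (b+k))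
        ≤ ((e+d) * 2^k) * (u ^ s * (u^2)^k) / (k.factorial * (Real.Gamma b * b ^ k)) := by
      apply div_le_div₀ (by positivity) _ (by positivity) (by nlinarith)
      exact mul_le_mul_of_nonneg_right hcoef (by positivity)
    refine key.trans (le_of_eq ?_)
    rw [div_pow, mul_pow]
    field_simp
noncomputable def bterm (ν u : ℝ) (k : ℕ) : ℝ :=
  u ^ (ν + 2 * (k : ℝ)) / ((k.factorial : ℝ) * Real.Gamma (ν + (k : ℝ) + 1))
lemma besselI_eq_tsum_bterm (ν z : ℝ) : besselI ν z = ∑' k : ℕ, bterm ν (z/2) k := rfl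
lemma bterm_pos (ν u : ℝ) (hν : -1 < ν) (hu : 0 < u) (k : ℕ) : 0 < bterm ν u k := by
  have h1 : (0:ℝ) < ν + k + 1 := by
    have : (0:ℝ) ≤ (k:ℝ) := Nat.cast_nonneg k
    linarith
  have hG := Real.Gamma_pos_of_pos h1
  have hfac : (0:ℝ) < k.factorial := by exact_mod_cast k.factorial_pos
  have := Real.rpow_pos_of_pos hu (ν + 2*(k:ℝ))
  unfold bterm
  positivity
lemma bterm_key (ν u : ℝ) (hν : -1 < ν) (hu : 0 < u) (k : ℕ) :
    u * bterm ν u k = (ν + k + 1) * bterm (ν+1) u k := by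
  have h1 : (0:ℝ) < ν + k + 1 := by
    have : (0:ℝ) ≤ (k:ℝ) := Nat.cast_nonneg k
    linarith
  have hG := Real.Gamma_pos_of_pos h1
  have hfac : (0:ℝ) < k.factorial := by exact_mod_cast k.factorial_pos
  have hrec : Real.Gamma (ν + 1 + (k:ℝ) + 1) = (ν + k + 1) * Real.Gamma (ν + k + 1) := by
    rw [show ν + 1 + (k:ℝ) + 1 = (ν + k + 1) + 1 by ring, Real.Gamma_add_one h1.ne']
  have hpow : u ^ (ν + 1 + 2*(k:ℝ)) = u ^ (ν + 2*(k:ℝ)) * u := by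
    rw [show ν + 1 + 2*(k:ℝ) = (ν + 2*(k:ℝ)) + 1 by ring, Real.rpow_add_one hu.ne']
  unfold bterm
  rw [hrec, hpow]
  field_simp
lemma bterm_succ (ν u : ℝ) (hν : -1 < ν) (hu : 0 < u) (k : ℕ) :
    ((k:ℝ) + 1) * bterm ν u (k+1) = u * bterm (ν+1) u k := by
  have hfac : (0:ℝ) < k.factorial := by exact_mod_cast k.factorial_pos
  have hfs : ((k+1).factorial : ℝ) = ((k:ℝ)+1) * k.factorial := by
    rw [Nat.factorial_succ]; push_cast; ring
  have hGpos : (0:ℝ) < Real.Gamma (ν + 1 + (k:ℝ) + 1) := by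
    apply Real.Gamma_pos_of_pos
    have : (0:ℝ) ≤ (k:ℝ) := Nat.cast_nonneg k
    linarith
  have hcast : (((k+1:ℕ)):ℝ) = (k:ℝ) + 1 := by push_cast; ring
  have hpow : u ^ (ν + 2*((k:ℝ)+1)) = u ^ (ν + 1 + 2*(k:ℝ)) * u := by
    rw [show ν + 2*((k:ℝ)+1) = (ν + 1 + 2*(k:ℝ)) + 1 by ring, Real.rpow_add_one hu.ne']
  have hG : Real.Gamma (ν + ((k+1:ℕ):ℝ) + 1) = Real.Gamma (ν + 1 + (k:ℝ) + 1) := by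
    rw [hcast]; ring_nf
  unfold bterm
  rw [hG, hfs, hcast, hpow]
  have h2 : ((k:ℝ)+1) ≠ 0 := by positivity
  field_simp
lemma summable_bterm_mul (ν u : ℝ) (hν : -1 < ν) (hu : 0 < u) (e d : ℝ)
    (he : 0 ≤ e) (hd : 0 ≤ d) :
    Summable (fun k : ℕ => (e * k + d) * bterm ν u k) := by
  have h := summable_master (ν+1) (by linarith) u hu ν e d he hd
  refine h.congr fun k => ?_
  unfold bterm
  rw [show ν + 1 + (k:ℝ) = ν + (k:ℝ) + 1 by ring, mul_div_assoc]
lemma bessel_key (ν z : ℝ) (hν : -1 < ν) (hz : 0 < z) :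
    |besselI ν z - besselI (ν+1) z| ≤ ((2*ν+4)/z) * besselI (ν+1) z := by
  set u : ℝ := z/2 with hu_def
  have hu : 0 < u := by rw [hu_def]; positivity
  have hzu : z = 2*u := by rw [hu_def]; ring
  set f : ℕ → ℝ := bterm ν u with hf_def
  set g : ℕ → ℝ := bterm (ν+1) u with hg_def
  have hν1 : -1 < ν + 1 := by linarith
  have hgpos : ∀ k, 0 < g k := fun k => bterm_pos _ _ hν1 hu k
  have hfpos : ∀ k, 0 < f k := fun k => bterm_pos _ _ hν hu k
  have hkey : ∀ k : ℕ, u * f k = (ν + k + 1) * g k := fun k => bterm_key ν u hν hu k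
  -- summabilities
  have sg : Summable g := by
    have := summable_bterm_mul (ν+1) u hν1 hu 0 1 le_rfl zero_le_one
    exact this.congr fun k => by push_cast; ring
  have sag : Summable (fun k : ℕ => 2*(ν+(k:ℝ)+1) * g k) := by
    have := summable_bterm_mul (ν+1) u hν1 hu 2 (2*ν+2) (by norm_num) (by linarith)
    exact this.congr fun k => by push_cast; ring
  have sug : Summable (fun k : ℕ => u * g k) := sg.mul_left u
  have sm : Summable (fun k : ℕ => (k:ℝ) * f k) := by
    have := summable_bterm_mul ν u hν hu 1 0 zero_le_one le_rfl
    exact this.congr fun k => by push_cast; ring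
  set p : ℕ → ℝ := fun k : ℕ => (2*ν+(k:ℝ)+3) * g k with hp_def
  have sp : Summable p := by
    have := summable_bterm_mul (ν+1) u hν1 hu 1 (2*ν+3) zero_le_one (by linarith)
    exact this.congr fun k => by simp only [hp_def]; push_cast; ring
  have sp1 : Summable (fun k : ℕ => p (k+1)) := (summable_nat_add_iff 1).mpr sp
  -- series identities
  have hSν : z * besselI ν z = ∑' k : ℕ, 2*(ν+(k:ℝ)+1) * g k := by
    rw [besselI_eq_tsum_bterm, ← hu_def, ← tsum_mul_left]
    refine tsum_congr fun k => ?_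
    calc z * f k = 2*(u * f k) := by rw [hzu]; ring
      _ = 2*(ν+(k:ℝ)+1) * g k := by rw [hkey k]; ring
  have hS1 : z * besselI (ν+1) z = ∑' k : ℕ, 2*(u * g k) := by
    rw [besselI_eq_tsum_bterm, ← hu_def, ← tsum_mul_left]
    exact tsum_congr fun k => by rw [hzu]; ring
  have hB1 : besselI (ν+1) z = ∑' k : ℕ, g k := by rw [besselI_eq_tsum_bterm, ← hu_def]
  -- termwise inequality A
  have termA : ∀ k : ℕ, 2*(ν+(k:ℝ)+1) * g k ≤ (2*ν+4) * g k + u * g k + (k:ℝ) * f k := by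
    intro k
    have hg := hgpos k
    have hc : (0:ℝ) ≤ (k:ℝ) := Nat.cast_nonneg k
    have key : 2*(ν+(k:ℝ)+1)*u ≤ (2*ν+4)*u + u^2 + (k:ℝ)*(ν+(k:ℝ)+1) := by
      rcases Nat.eq_zero_or_pos k with hk | hk
      · subst hk; push_cast; nlinarith [hu]
      · have h1 : (1:ℝ) ≤ (k:ℝ) := by exact_mod_cast hk
        nlinarith [sq_nonneg (u - ((k:ℝ)-1))]
    have hkf : (k:ℝ) * (u * f k) = (k:ℝ) * ((ν+(k:ℝ)+1) * g k) := by rw [hkey k]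
    have H : u * (2*(ν+(k:ℝ)+1) * g k) ≤ u * ((2*ν+4) * g k + u * g k + (k:ℝ) * f k) := by
      nlinarith [mul_nonneg (sub_nonneg.2 key) hg.le, hkf]
    exact le_of_mul_le_mul_left H hu
  -- sum inequality A
  have ineqA : (∑' k : ℕ, 2*(ν+(k:ℝ)+1) * g k)
      ≤ (2*ν+4) * (∑' k : ℕ, g k) + ∑' k : ℕ, 2*(u * g k) := by
    have hs : Summable (fun k : ℕ => (2*ν+4) * g k + u * g k + (k:ℝ) * f k) :=
      ((sg.mul_left _).add sug).add sm
    have h1 := Summable.tsum_le_tsum termA sag hs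
    have h2 : (∑' k : ℕ, ((2*ν+4) * g k + u * g k + (k:ℝ) * f k))
        = (2*ν+4) * (∑' k : ℕ, g k) + (∑' k : ℕ, u * g k) + ∑' k : ℕ, (k:ℝ) * f k := by
      rw [Summable.tsum_add ((sg.mul_left _).add sug) sm, Summable.tsum_add (sg.mul_left _) sug, tsum_mul_left]
    have h3 : (∑' k : ℕ, (k:ℝ) * f k) = ∑' k : ℕ, u * g k := by
      rw [Summable.tsum_eq_zero_add sm]
      simp only [Nat.cast_zero, zero_mul, zero_add]
      refine tsum_congr fun k => ?_
      push_cast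
      exact bterm_succ ν u hν hu k
    have h4 : (∑' k : ℕ, 2*(u * g k)) = 2 * ∑' k : ℕ, u * g k := tsum_mul_left
    rw [h2, h3] at h1
    rw [h4]
    linarith
  -- termwise inequality B
  have termB : ∀ k : ℕ, 2*(u * g k) ≤ p k + p (k+1) := by
    intro k
    have hg := hgpos k
    have hg1 := hgpos (k+1)
    have hc : (0:ℝ) ≤ (k:ℝ) := Nat.cast_nonneg k
    have cpos : (0:ℝ) < ((k:ℝ)+1)*(ν+(k:ℝ)+2) := by nlinarith
    have hrec : (((k:ℝ)+1)*(ν+(k:ℝ)+2)) * g (k+1) = u^2 * g k := by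
      have h1 := bterm_succ (ν+1) u hν1 hu k
      have h2 := bterm_key (ν+1) u hν1 hu k
      have h3 : (ν+1+(k:ℝ)+1) * (((k:ℝ)+1) * bterm (ν+1) u (k+1))
          = u * ((ν+1+(k:ℝ)+1) * bterm (ν+1+1) u k) := by rw [h1]; ring
      rw [← h2] at h3
      linear_combination h3
    have hab : ((k:ℝ)+1)*(ν+(k:ℝ)+2) ≤ (2*ν+(k:ℝ)+3)*(2*ν+(k:ℝ)+4) := by nlinarith
    have keyB : 2*u*(((k:ℝ)+1)*(ν+(k:ℝ)+2))
        ≤ (2*ν+(k:ℝ)+3)*(((k:ℝ)+1)*(ν+(k:ℝ)+2)) + (2*ν+(k:ℝ)+4)*u^2 := by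
      nlinarith [sq_nonneg ((2*ν+(k:ℝ)+4)*u - ((k:ℝ)+1)*(ν+(k:ℝ)+2)),
        mul_nonneg cpos.le (sub_nonneg.2 hab), hu.le, hc]
    have H : (((k:ℝ)+1)*(ν+(k:ℝ)+2)) * (2*(u * g k))
        ≤ (((k:ℝ)+1)*(ν+(k:ℝ)+2)) * ((2*ν+(k:ℝ)+3) * g k + (2*ν+((k:ℝ)+1)+3) * g (k+1)) := by
      nlinarith [mul_nonneg (sub_nonneg.2 keyB) hg.le, hrec]
    have H2 := le_of_mul_le_mul_left H cpos
    simp only [hp_def]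
    push_cast
    linarith
  -- sum inequality B
  have ineqB : (∑' k : ℕ, 2*(u * g k))
      ≤ (∑' k : ℕ, 2*(ν+(k:ℝ)+1) * g k) + (2*ν+4) * ∑' k : ℕ, g k := by
    have h1 := Summable.tsum_le_tsum termB (sug.mul_left 2) (sp.add sp1)
    have h2 : (∑' k : ℕ, (p k + p (k+1))) = (∑' k : ℕ, p k) + ∑' k : ℕ, p (k+1) :=
      Summable.tsum_add sp sp1
    have h3 : (∑' k : ℕ, p (k+1)) ≤ ∑' k : ℕ, p k := by
      have := Summable.tsum_eq_zero_add sp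
      have hp0 : 0 ≤ p 0 := by
        simp only [hp_def]
        have := hgpos 0
        push_cast
        nlinarith
      linarith
    have h5 : 2 * (∑' k : ℕ, p k)
        = (∑' k : ℕ, 2*(ν+(k:ℝ)+1) * g k) + (2*ν+4) * ∑' k : ℕ, g k := by
      calc 2 * (∑' k : ℕ, p k) = ∑' k : ℕ, (2*(ν+(k:ℝ)+1) * g k + (2*ν+4) * g k) := by
            rw [← tsum_mul_left]
            exact tsum_congr fun k => by simp only [hp_def]; ring
        _ = (∑' k : ℕ, 2*(ν+(k:ℝ)+1) * g k) + (2*ν+4) * ∑' k : ℕ, g k := by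
            rw [Summable.tsum_add sag (sg.mul_left _), tsum_mul_left]
    linarith
  -- assemble
  have hB1nn : 0 ≤ besselI (ν+1) z := by
    rw [hB1]; exact tsum_nonneg fun k => (hgpos k).le
  have hA : z * besselI ν z ≤ (2*ν+4) * besselI (ν+1) z + z * besselI (ν+1) z := by
    rw [hSν, hS1, hB1]; linarith
  have hB : z * besselI (ν+1) z ≤ z * besselI ν z + (2*ν+4) * besselI (ν+1) z := by
    rw [hSν, hS1, hB1]; linarith
  have habs : |z * besselI ν z - z * besselI (ν+1) z| ≤ (2*ν+4) * besselI (ν+1) z :=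
    abs_sub_le_iff.mpr ⟨by linarith, by linarith⟩
  have hzz : z ≠ 0 := hz.ne'
  have heq : |besselI ν z - besselI (ν+1) z| = |z * besselI ν z - z * besselI (ν+1) z| / z := by
    rw [← mul_sub, abs_mul, abs_of_pos hz, mul_comm, mul_div_assoc, div_self hzz, mul_one]
  rw [heq]
  calc |z * besselI ν z - z * besselI (ν+1) z| / z ≤ ((2*ν+4) * besselI (ν+1) z) / z := by
        gcongr
    _ = ((2*ν+4)/z) * besselI (ν+1) z := by ring
lemma besselI_nonneg (ν z : ℝ) (hν : -1 < ν) (hz : 0 ≤ z) : 0 ≤ besselI ν z := by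
  apply tsum_nonneg; intro k
  have h1 : (0:ℝ) < ν + k + 1 := by
    have : (0:ℝ) ≤ (k:ℝ) := Nat.cast_nonneg k
    linarith
  have hG := Real.Gamma_pos_of_pos h1
  have hfac : (0:ℝ) < k.factorial := by exact_mod_cast k.factorial_pos
  exact div_nonneg (Real.rpow_nonneg (by linarith) _) (by positivity)

/-- for `α > −1` there is `C > 0` (depending only on `α`) such that for all
`t > 0`, `x, y > 0`, `|p_t^α(x,y) − p_t^{α+1}(x,y)| ≤ C ((1−r)/(2r^{1/2}xy)) p_t^{α+1}(x,y)`,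
where `r = e^{−4t}`. -/
theorem statement3 (α : ℝ) (hα : -1 < α) :
    ∃ C : ℝ, 0 < C ∧ ∀ t : ℝ, 0 < t → ∀ x : ℝ, 0 < x → ∀ y : ℝ, 0 < y →
      |laguerreHeat α t x y - laguerreHeat (α + 1) t x y| ≤
        C * ((1 - Real.exp (-(4 * t))) / (2 * Real.sqrt (Real.exp (-(4 * t))) * x * y)) *
          laguerreHeat (α + 1) t x y := by
  refine ⟨2*α+4, by linarith, fun t ht x hx y hy => ?_⟩
  unfold laguerreHeat
  have hr0 : 0 < Real.exp (-(4*t)) := Real.exp_pos _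
  have hr1 : Real.exp (-(4*t)) < 1 := Real.exp_lt_one_iff.mpr (by linarith)
  set r := Real.exp (-(4*t)) with hr_def
  have hden : 0 < 1 - r := by linarith
  have hs : 0 < Real.sqrt r := Real.sqrt_pos.mpr hr0
  set z := 2 * Real.sqrt r / (1 - r) * (x*y) with hz_def
  have hz : 0 < z := by
    rw [hz_def]
    exact mul_pos (div_pos (by positivity) hden) (mul_pos hx hy)
  have hsxy : 0 < Real.sqrt (r * x * y) := Real.sqrt_pos.mpr (by positivity)
  set A := 2 * Real.sqrt (r * x * y) / (1 - r) *
    Real.exp (-(1 / 2) * ((1 + r) / (1 - r)) * (x ^ 2 + y ^ 2)) with hA_def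
  have hApos : 0 < A := by
    rw [hA_def]
    have := Real.exp_pos (-(1 / 2) * ((1 + r) / (1 - r)) * (x ^ 2 + y ^ 2))
    positivity
  have hkey := bessel_key α z hα hz
  have hBnn : 0 ≤ besselI (α+1) z := besselI_nonneg (α+1) z (by linarith) hz.le
  have hfrac : (2*α+4)/z = (2*α+4) * ((1 - r) / (2 * Real.sqrt r * x * y)) := by
    have hzeq : z = (2 * Real.sqrt r * x * y) / (1 - r) := by rw [hz_def]; ring
    rw [hzeq, div_div_eq_mul_div, mul_div_assoc]
  calc |A * besselI α z - A * besselI (α+1) z|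
      = A * |besselI α z - besselI (α+1) z| := by
        rw [← mul_sub, abs_mul, abs_of_pos hApos]
    _ ≤ A * (((2*α+4)/z) * besselI (α+1) z) := by
        exact mul_le_mul_of_nonneg_left hkey hApos.le
    _ = (2*α+4) * ((1 - r) / (2 * Real.sqrt r * x * y)) * (A * besselI (α+1) z) := by
        rw [hfrac]; ring
end

section
/- Let ν > −1. Then for all t > 0 and x, y > 0, (∂/∂x) p_t^ν(x,y) + x · p_t^ν(x,y) − ((ν + 1/2)/x) · p_t^ν(x,y) = x · p_t^ν(x,y) − ((1+r)/(1−r)) · x · p_t^ν(x,y) + (2 r^{1/2}/(1−r)) · y · p_t^{ν+1}(x,y), where r = e^{−4t}. Equivalently, δ_ν p_t^ν(x,y) = x p_t^ν(x,y) − ((1+r)/(1−r)) x p_t^ν(x,y) + (2 r^{1/2}/(1−r)) y p_t^{ν+1}(x,y), where δ_ν acts in the variable x. -/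
open MeasureTheory Real Set ENNReal

/-- The operator `δ_ν f(x) = f'(x) + x f(x) − (ν+1/2) f(x)/x`. -/
noncomputable def laguerreDelta (ν : ℝ) (f : ℝ → ℝ) : ℝ → ℝ :=
  fun x => deriv f x + x * f x - (ν + 1 / 2) * f x / x

lemma gammaAux_pos {ν : ℝ} (hν : -1 < ν) (k : ℕ) : 0 < Real.Gamma (ν + k + 1) :=
  Real.Gamma_pos_of_pos (by have : (0:ℝ) ≤ k := Nat.cast_nonneg k; linarith)

lemma summable_main {ν : ℝ} (hν : -1 < ν) {b : ℝ} (hb : 0 ≤ b) :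
    Summable (fun k : ℕ => ((k : ℝ) + 1) * b ^ k / ((k.factorial : ℝ) * Real.Gamma (ν + k + 1))) := by
  apply summable_of_ratio_norm_eventually_le (r := 1/2) (by norm_num)
  filter_upwards [Filter.eventually_ge_atTop (⌈b⌉₊ + 2)] with n hn
  set a : ℕ → ℝ := fun k => ((k : ℝ) + 1) * b ^ k / ((k.factorial : ℝ) * Real.Gamma (ν + k + 1))
  have hG := gammaAux_pos hν n
  have hF : (0:ℝ) < n.factorial := by positivity
  have hνn : (0:ℝ) < ν + n + 1 := by have : (0:ℝ) ≤ n := Nat.cast_nonneg n; linarith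
  have hbn : b ≤ (n : ℝ) := le_trans (Nat.le_ceil b) (by exact_mod_cast Nat.cast_le.mpr (le_trans (Nat.le_add_right _ 2) hn))
  have hn2 : (2:ℝ) ≤ n := by exact_mod_cast le_trans (by omega : 2 ≤ ⌈b⌉₊ + 2) hn
  have han : 0 ≤ a n := by
    apply div_nonneg (by positivity) (le_of_lt (by positivity))
  have key : a (n+1) = a n * (((n:ℝ)+2) * b / (((n:ℝ)+1)^2 * (ν + n + 1))) := by
    simp only [a]
    have hfac : ((n+1).factorial : ℝ) = ((n:ℝ)+1) * n.factorial := by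
      rw [Nat.factorial_succ]; push_cast; ring
    have hGam : Real.Gamma (ν + (n+1:ℕ) + 1) = (ν + n + 1) * Real.Gamma (ν + n + 1) := by
      push_cast
      rw [show ν + ((n:ℝ)+1) + 1 = (ν + n + 1) + 1 by ring, Real.Gamma_add_one (ne_of_gt hνn)]
    rw [hfac, hGam]
    field_simp
    push_cast
    ring
  have hq : ((n:ℝ)+2) * b / (((n:ℝ)+1)^2 * (ν + n + 1)) ≤ 1/2 := by
    rw [div_le_iff₀ (by positivity)]
    nlinarith [sq_nonneg ((n:ℝ) - b)]
  have ha1 : 0 ≤ a (n+1) := by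
    have hG1 := gammaAux_pos hν (n+1)
    apply div_nonneg (by positivity) (le_of_lt (by positivity))
  rw [Real.norm_of_nonneg ha1, Real.norm_of_nonneg han, key, mul_comm (1/2) (a n)]
  exact mul_le_mul_of_nonneg_left hq han

noncomputable def besselG (ν w : ℝ) : ℝ :=
  ∑' k : ℕ, w ^ k / ((k.factorial : ℝ) * Real.Gamma (ν + (k : ℝ) + 1))

lemma besselG_summable {ν : ℝ} (hν : -1 < ν) (w : ℝ) :
    Summable (fun k : ℕ => w ^ k / ((k.factorial : ℝ) * Real.Gamma (ν + (k : ℝ) + 1))) := by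
  apply Summable.of_norm_bounded (summable_main hν (abs_nonneg w))
  intro k
  have hG := gammaAux_pos hν k
  have hF : (0:ℝ) < k.factorial := by positivity
  rw [Real.norm_eq_abs, abs_div, abs_mul, abs_pow, abs_of_pos hF, abs_of_pos hG]
  apply div_le_div_of_nonneg_right _ (by positivity)
  nlinarith [pow_nonneg (abs_nonneg w) k, Nat.cast_nonneg (α := ℝ) k]

lemma besselG_hasDerivAt {ν : ℝ} (hν : -1 < ν) (w : ℝ) :
    HasDerivAt (besselG ν) (besselG (ν + 1) w) w := by
  set R : ℝ := |w| + 1 with hR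
  have hR1 : (1:ℝ) ≤ R := by simp [hR]
  have hR0 : (0:ℝ) < R := by linarith
  set g : ℕ → ℝ → ℝ := fun n x => x ^ n / ((n.factorial : ℝ) * Real.Gamma (ν + (n : ℝ) + 1)) with hg
  set g' : ℕ → ℝ → ℝ := fun n x => ((n : ℝ) * x ^ (n - 1)) / ((n.factorial : ℝ) * Real.Gamma (ν + (n : ℝ) + 1)) with hg'
  set u : ℕ → ℝ := fun n => ((n : ℝ) + 1) * R ^ n / ((n.factorial : ℝ) * Real.Gamma (ν + (n : ℝ) + 1)) with hu
  have hu_sum : Summable u := summable_main hν hR0.le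
  have hderiv : ∀ n x, HasDerivAt (g n) (g' n x) x := fun n x =>
    (hasDerivAt_pow n x).div_const _
  have hbound : ∀ n x, x ∈ Metric.ball (0:ℝ) R → ‖g' n x‖ ≤ u n := by
    intro n x hxball
    have hxR : |x| ≤ R := by
      rw [Metric.mem_ball, Real.dist_eq, sub_zero] at hxball; linarith
    have hG := gammaAux_pos hν n
    have hF : (0:ℝ) < n.factorial := by positivity
    simp only [hg', hu]
    rw [Real.norm_eq_abs, abs_div, abs_mul, abs_mul, abs_pow, abs_of_pos hF, abs_of_pos hG,
      Nat.abs_cast]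
    apply div_le_div_of_nonneg_right _ (by positivity)
    calc (n:ℝ) * |x| ^ (n-1) ≤ (n:ℝ) * R ^ (n-1) := by
          apply mul_le_mul_of_nonneg_left (pow_le_pow_left₀ (abs_nonneg x) hxR _) (Nat.cast_nonneg n)
      _ ≤ ((n:ℝ)+1) * R ^ n := by
          apply mul_le_mul (by linarith) (pow_le_pow_right₀ hR1 (Nat.sub_le n 1)) (by positivity) (by linarith)
  have hsum0 : Summable fun n => g n w := besselG_summable hν w
  have hw : w ∈ Metric.ball (0:ℝ) R := by
    rw [Metric.mem_ball, Real.dist_eq, sub_zero]; simp [hR]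
  have hmain : HasDerivAt (fun z => ∑' n, g n z) (∑' n, g' n w) w := by
    apply hasDerivAt_tsum_of_isPreconnected hu_sum Metric.isOpen_ball
      ((convex_ball (0:ℝ) R).isPreconnected) (fun n y _ => hderiv n y) hbound
      hw hsum0 hw
  have hsum' : Summable fun n => g' n w :=
    Summable.of_norm_bounded hu_sum (fun n => hbound n w hw)
  have heq : ∑' n, g' n w = besselG (ν + 1) w := by
    rw [hsum'.tsum_eq_zero_add]
    have h0 : g' 0 w = 0 := by simp [hg']
    rw [h0, zero_add, besselG]
    apply tsum_congr
    intro n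
    simp only [hg', Nat.add_sub_cancel]
    have hfac : (((n+1).factorial : ℕ) : ℝ) = ((n:ℝ)+1) * n.factorial := by
      rw [Nat.factorial_succ]; push_cast; ring
    have harg : ν + ((n+1:ℕ) : ℝ) + 1 = (ν + 1) + n + 1 := by push_cast; ring
    rw [hfac, harg]
    have hG : (0:ℝ) < Real.Gamma ((ν+1) + n + 1) := gammaAux_pos (by linarith) n
    have h1 : ((n:ℝ)+1) ≠ 0 := by positivity
    have h2 : (n.factorial:ℝ) ≠ 0 := by positivity
    have h3 : Real.Gamma ((ν+1) + n + 1) ≠ 0 := ne_of_gt hG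
    push_cast
    field_simp
  rw [← heq]
  exact hmain

lemma besselI_eq_G {ν z : ℝ} (hz : 0 < z) :
    besselI ν z = (z / 2) ^ ν * besselG ν ((z / 2) ^ 2) := by
  have h2 : (0:ℝ) < z / 2 := by linarith
  rw [besselI, besselG, ← tsum_mul_left]
  apply tsum_congr
  intro k
  rw [Real.rpow_add h2, mul_div_assoc]
  congr 2
  rw [show (2:ℝ) * (k:ℝ) = ((2 * k : ℕ) : ℝ) by push_cast; ring, Real.rpow_natCast, pow_mul]

lemma besselI_hasDerivAt {ν : ℝ} (hν : -1 < ν) {z : ℝ} (hz : 0 < z) :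
    HasDerivAt (besselI ν) (ν / z * besselI ν z + besselI (ν + 1) z) z := by
  have h2 : (0:ℝ) < z / 2 := by linarith
  set w : ℝ := (z / 2) ^ 2 with hw
  -- derivative of u ↦ (u/2)^ν
  have hpow : HasDerivAt (fun u : ℝ => (u / 2) ^ ν) ((1/2) * ν * (z/2) ^ (ν - 1)) z := by
    have h1 : HasDerivAt (fun u : ℝ => u / 2) (1/2) z := by
      simpa using (hasDerivAt_id z).div_const 2
    exact h1.rpow_const (Or.inl (ne_of_gt h2))
  -- derivative of u ↦ (u/2)^2
  have hsq : HasDerivAt (fun u : ℝ => (u / 2) ^ 2) (z / 2) z := by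
    have h1 : HasDerivAt (fun u : ℝ => u / 2) (1/2) z := by
      simpa using (hasDerivAt_id z).div_const 2
    have := h1.pow 2
    refine this.congr_deriv ?_
    push_cast
    ring
  have hGcomp : HasDerivAt (fun u : ℝ => besselG ν ((u / 2) ^ 2)) (besselG (ν + 1) w * (z / 2)) z :=
    by have := (besselG_hasDerivAt hν w).comp z hsq; exact this
  have hh : HasDerivAt (fun u : ℝ => (u / 2) ^ ν * besselG ν ((u / 2) ^ 2))
      ((1/2) * ν * (z/2) ^ (ν - 1) * besselG ν w + (z/2) ^ ν * (besselG (ν + 1) w * (z / 2))) z :=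
    hpow.mul hGcomp
  have hev : besselI ν =ᶠ[nhds z] (fun u : ℝ => (u / 2) ^ ν * besselG ν ((u / 2) ^ 2)) := by
    filter_upwards [Ioi_mem_nhds hz] with u hu
    exact besselI_eq_G hu
  have hfinal := hh.congr_of_eventuallyEq hev
  refine hfinal.congr_deriv ?_
  rw [besselI_eq_G hz, besselI_eq_G (ν := ν + 1) hz, ← hw]
  have hzz : (z/2) ^ (ν - 1) = (z/2) ^ ν / (z/2) := by
    rw [Real.rpow_sub h2, Real.rpow_one]
  have hzz1 : (z/2) ^ (ν + 1) = (z/2) ^ ν * (z/2) := by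
    rw [Real.rpow_add h2, Real.rpow_one]
  rw [hzz, hzz1]
  field_simp

/-- for `ν > −1`, `t > 0` and `x, y > 0`,
`δ_ν p_t^ν(x,y) = x p_t^ν(x,y) − ((1+r)/(1−r)) x p_t^ν(x,y) + (2r^{1/2}/(1−r)) y p_t^{ν+1}(x,y)`,
where `δ_ν` acts in the variable `x` and `r = e^{−4t}`. -/
theorem statement4 (ν : ℝ) (hν : -1 < ν) (t x y : ℝ) (ht : 0 < t) (hx : 0 < x) (hy : 0 < y) :
    laguerreDelta ν (fun u => laguerreHeat ν t u y) x =
      x * laguerreHeat ν t x y -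
        ((1 + Real.exp (-(4 * t))) / (1 - Real.exp (-(4 * t)))) * x * laguerreHeat ν t x y +
        (2 * Real.sqrt (Real.exp (-(4 * t))) / (1 - Real.exp (-(4 * t)))) * y *
          laguerreHeat (ν + 1) t x y := by
  set r : ℝ := Real.exp (-(4 * t)) with hrdef
  have hr0 : 0 < r := Real.exp_pos _
  have hr1 : r < 1 := by
    rw [hrdef]
    apply Real.exp_lt_one_iff.mpr  -- name to check
    linarith
  have h1r : 0 < 1 - r := by linarith
  have hsr0 : 0 < Real.sqrt r := Real.sqrt_pos.mpr hr0
  have hz : 0 < 2 * Real.sqrt r / (1 - r) * (x * y) := by positivity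
  have hrxy : (0:ℝ) < r * x * y := by positivity
  set c : ℝ := (1 + r) / (1 - r) with hcdef
  -- derivative of A
  have hinnerA : HasDerivAt (fun u : ℝ => r * u * y) (r * y) x := by
    simpa using ((hasDerivAt_id x).const_mul r).mul_const y
  have hA : HasDerivAt (fun u : ℝ => 2 * Real.sqrt (r * u * y) / (1 - r))
      (2 * (1 / (2 * Real.sqrt (r * x * y)) * (r * y)) / (1 - r)) x :=
    (((Real.hasDerivAt_sqrt (ne_of_gt hrxy)).comp x hinnerA).const_mul 2).div_const (1 - r)
  -- derivative of B
  have hinnerB : HasDerivAt (fun u : ℝ => -(1 / 2) * c * (u ^ 2 + y ^ 2))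
      (-(1 / 2) * c * (2 * x)) x := by
    have := ((hasDerivAt_pow 2 x).add_const (y ^ 2)).const_mul (-(1 / 2) * c)
    simpa using this
  have hB : HasDerivAt (fun u : ℝ => Real.exp (-(1 / 2) * c * (u ^ 2 + y ^ 2)))
      (Real.exp (-(1 / 2) * c * (x ^ 2 + y ^ 2)) * (-(1 / 2) * c * (2 * x))) x :=
    hinnerB.exp
  -- derivative of C
  have hinnerC : HasDerivAt (fun u : ℝ => 2 * Real.sqrt r / (1 - r) * (u * y))
      (2 * Real.sqrt r / (1 - r) * y) x := by
    simpa using ((hasDerivAt_id x).mul_const y).const_mul (2 * Real.sqrt r / (1 - r))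
  have hC : HasDerivAt (fun u : ℝ => besselI ν (2 * Real.sqrt r / (1 - r) * (u * y)))
      ((ν / (2 * Real.sqrt r / (1 - r) * (x * y)) *
          besselI ν (2 * Real.sqrt r / (1 - r) * (x * y)) +
        besselI (ν + 1) (2 * Real.sqrt r / (1 - r) * (x * y))) *
        (2 * Real.sqrt r / (1 - r) * y)) x :=
    by have := (besselI_hasDerivAt hν hz).comp x hinnerC; exact this
  have hF : HasDerivAt (fun u : ℝ => laguerreHeat ν t u y) _ x := (hA.mul hB).mul hC
  simp only [laguerreDelta]
  rw [hF.deriv]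
  simp only [laguerreHeat, Pi.mul_apply]
  rw [← hrdef, ← hcdef]
  set sr : ℝ := Real.sqrt r with hsrdef
  set sx : ℝ := Real.sqrt x with hsxdef
  set sy : ℝ := Real.sqrt y with hsydef
  set Iν : ℝ := besselI ν (2 * sr / (1 - r) * (x * y)) with hIνdef
  set Iν1 : ℝ := besselI (ν + 1) (2 * sr / (1 - r) * (x * y)) with hIν1def
  set E : ℝ := Real.exp (-(1 / 2) * c * (x ^ 2 + y ^ 2)) with hEdef
  have hS : Real.sqrt (r * x * y) = sr * sx * sy := by
    rw [Real.sqrt_mul (by positivity), Real.sqrt_mul hr0.le, hsrdef, hsxdef, hsydef]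
  have hx2 : x = sx ^ 2 := (Real.sq_sqrt hx.le).symm
  have hy2 : y = sy ^ 2 := (Real.sq_sqrt hy.le).symm
  have hr2 : r = sr ^ 2 := (Real.sq_sqrt hr0.le).symm
  have hsx0 : sx ≠ 0 := by rw [hsxdef]; positivity
  have hsy0 : sy ≠ 0 := by rw [hsydef]; positivity
  have hsr0' : sr ≠ 0 := ne_of_gt hsr0
  rw [hS, hcdef, hx2, hy2, hr2]
  have h1r' : (1 : ℝ) - sr ^ 2 ≠ 0 := by rw [← hr2]; linarith
  field_simp
  ring
end

section
/- Let α, β ∈ [0,1) with α + β < 1 and let c > 0. For t > 0 and x, y > 0 define S^t_{α,β}(x,y) = t^{-1/2} · exp(−|x−y|²/(c·t)) · (1 + √t/x)^α · (1 + √t/y)^β. Then there exists a constant C > 0, depending only on α, β and c, such that for all t > 0 and all x, y > 0, S^t_{α,β}(x,y) ≤ C · [ t^{-1/2} exp(−|x−y|²/(c·t)) + (1/x)·1_{(y/2,2y)}(x) + (1/x)·(x/y)^β·1_{[2y,∞)}(x) + (1/y)·(y/x)^α·1_{(0,y/2]}(x) ], where 1_E denotes the indicator function of the set E. -/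
open MeasureTheory Real Set

/-- The kernel `S^t_{α,β}(x,y) = t^{-1/2} exp(−|x−y|²/(ct)) (1+√t/x)^α (1+√t/y)^β`. -/
noncomputable def Sker (c α β t x y : ℝ) : ℝ :=
  (1 / Real.sqrt t) * Real.exp (-((x - y) ^ 2 / (c * t))) *
    (1 + Real.sqrt t / x) ^ α * (1 + Real.sqrt t / y) ^ β

lemma two_rpow_le_two {γ : ℝ} (hγ1 : γ ≤ 1) : (2:ℝ) ^ γ ≤ 2 := by
  calc (2:ℝ) ^ γ ≤ (2:ℝ) ^ (1:ℝ) := Real.rpow_le_rpow_of_exponent_le one_le_two hγ1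
    _ = 2 := Real.rpow_one 2

lemma aux_pow_le_two {γ s x : ℝ} (hγ0 : 0 ≤ γ) (hγ1 : γ ≤ 1) (hx : 0 < x) (hs : 0 ≤ s)
    (hsx : s ≤ x) : (1 + s / x) ^ γ ≤ 2 := by
  have h1 : (0:ℝ) ≤ 1 + s / x := by positivity
  have h2 : 1 + s / x ≤ 2 := by
    have : s / x ≤ 1 := (div_le_one hx).mpr hsx
    linarith
  calc (1 + s / x) ^ γ ≤ (2:ℝ) ^ γ := Real.rpow_le_rpow h1 h2 hγ0
    _ ≤ 2 := two_rpow_le_two hγ1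

lemma aux_pow_le_ratio {γ s x : ℝ} (hγ0 : 0 ≤ γ) (hγ1 : γ ≤ 1) (hx : 0 < x)
    (hxs : x ≤ s) : (1 + s / x) ^ γ ≤ 2 * (s / x) ^ γ := by
  have hsx1 : 1 ≤ s / x := (one_le_div hx).mpr hxs
  have h1 : (0:ℝ) ≤ 1 + s / x := by linarith
  have h2 : 1 + s / x ≤ 2 * (s / x) := by linarith
  have h3 : (0:ℝ) ≤ s / x := by linarith
  calc (1 + s / x) ^ γ ≤ (2 * (s / x)) ^ γ := Real.rpow_le_rpow h1 h2 hγ0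
    _ = 2 ^ γ * (s / x) ^ γ := Real.mul_rpow (by norm_num) h3
    _ ≤ 2 * (s / x) ^ γ := by
        have := two_rpow_le_two hγ1
        have h4 : 0 ≤ (s / x) ^ γ := Real.rpow_nonneg h3 γ
        nlinarith

lemma half_base {a b γ : ℝ} (ha : 0 < a) (hb : 0 < b) (hba : b ≤ 2 * a)
    (hγ1 : γ ≤ 1) (hγm : -1 ≤ γ - 1) : a ^ (γ - 1) ≤ 2 * b ^ (γ - 1) := by
  have h1 : a ^ (γ - 1) ≤ (b / 2) ^ (γ - 1) :=
    Real.rpow_le_rpow_of_nonpos (by positivity) (by linarith) (by linarith)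
  have h2 : (b / 2 : ℝ) ^ (γ - 1) = b ^ (γ - 1) / 2 ^ (γ - 1) :=
    Real.div_rpow hb.le (by norm_num) _
  have h3 : (1/2 : ℝ) ≤ 2 ^ (γ - 1) := by
    calc (1/2 : ℝ) = (2:ℝ) ^ (-1 : ℝ) := by rw [Real.rpow_neg_one]; norm_num
      _ ≤ 2 ^ (γ - 1) := Real.rpow_le_rpow_of_exponent_le one_le_two hγm
  have h4 : (0:ℝ) < 2 ^ (γ - 1) := Real.rpow_pos_of_pos (by norm_num) _
  have h5 : (0:ℝ) ≤ b ^ (γ - 1) := Real.rpow_nonneg hb.le _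
  have h6 : b ^ (γ - 1) / 2 ^ (γ - 1) ≤ 2 * b ^ (γ - 1) := by
    rw [div_le_iff₀ h4]; nlinarith
  linarith [h2 ▸ h1]

lemma core_left {α β c t x y : ℝ} (hα0 : 0 ≤ α) (hα1 : α ≤ 1) (hβ0 : 0 ≤ β) (hβ1 : β ≤ 1)
    (hαβ : α + β ≤ 1) (hc : 0 < c) (ht : 0 < t) (hx : 0 < x) (hy : 0 < y)
    (hxy : x ≤ y) (hxs : x ≤ Real.sqrt t) :
    Sker c α β t x y ≤ 8 * (c + 1) * (1/y * (y/x) ^ α) := by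
  set s := Real.sqrt t with hs_def
  have hs : 0 < s := lt_of_lt_of_le hx hxs
  have hts : t = s ^ 2 := (Real.sq_sqrt ht.le).symm
  set E := Real.exp (-((x - y) ^ 2 / (c * t))) with hE_def
  have hE0 : 0 < E := Real.exp_pos _
  have hE1 : E ≤ 1 := by
    rw [hE_def, Real.exp_le_one_iff]
    have : 0 ≤ (x - y) ^ 2 / (c * t) := by positivity
    linarith
  have hSeq : Sker c α β t x y = 1/s * E * (1 + s/x) ^ α * (1 + s/y) ^ β := by
    rw [Sker, ← hs_def, ← hE_def]
  have hA : (1 + s/x) ^ α ≤ 2 * (s/x) ^ α := aux_pow_le_ratio hα0 hα1 hx hxs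
  have hxα : (0:ℝ) < x ^ α := Real.rpow_pos_of_pos hx _
  have hyβ : (0:ℝ) < y ^ β := Real.rpow_pos_of_pos hy _
  have hsα : (0:ℝ) < s ^ α := Real.rpow_pos_of_pos hs _
  have hVeq : 1/y * (y/x) ^ α = y ^ (α - 1) / x ^ α := by
    rw [Real.div_rpow hy.le hx.le, show α - 1 = α + (-1) by ring, Real.rpow_add hy,
      Real.rpow_neg_one]
    ring
  have hV0 : (0:ℝ) ≤ y ^ (α - 1) / x ^ α := by positivity
  rcases le_total y s with hys | hsy
  · -- y ≤ s
    have hB : (1 + s/y) ^ β ≤ 2 * (s/y) ^ β := aux_pow_le_ratio hβ0 hβ1 hy hys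
    have h1 : Sker c α β t x y ≤ 1/s * 1 * (2 * (s/x) ^ α) * (2 * (s/y) ^ β) := by
      rw [hSeq]; gcongr <;> positivity
    have h2 : 1/s * 1 * (2 * (s/x) ^ α) * (2 * (s/y) ^ β)
        = 4 * (s ^ (α + β - 1) / (x ^ α * y ^ β)) := by
      rw [Real.div_rpow hs.le hx.le, Real.div_rpow hs.le hy.le,
        show α + β - 1 = α + (β + (-1)) by ring, Real.rpow_add hs, Real.rpow_add hs,
        Real.rpow_neg_one]
      field_simp
      ring
    have h3 : s ^ (α + β - 1) ≤ y ^ (α + β - 1) :=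
      Real.rpow_le_rpow_of_nonpos hy hys (by linarith)
    have h4 : y ^ (α + β - 1) / (x ^ α * y ^ β) = y ^ (α - 1) / x ^ α := by
      rw [show α + β - 1 = (α - 1) + β by ring, Real.rpow_add hy]
      field_simp
    have h5 : Sker c α β t x y ≤ 4 * (y ^ (α - 1) / x ^ α) := by
      calc Sker c α β t x y ≤ 1/s * 1 * (2 * (s/x) ^ α) * (2 * (s/y) ^ β) := h1
        _ = 4 * (s ^ (α + β - 1) / (x ^ α * y ^ β)) := h2
        _ ≤ 4 * (y ^ (α + β - 1) / (x ^ α * y ^ β)) := by gcongr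
        _ = 4 * (y ^ (α - 1) / x ^ α) := by rw [h4]
    rw [hVeq]
    calc Sker c α β t x y ≤ 4 * (y ^ (α - 1) / x ^ α) := h5
      _ ≤ 8 * (c + 1) * (y ^ (α - 1) / x ^ α) :=
          mul_le_mul_of_nonneg_right (by linarith) hV0
  · -- s ≤ y
    have hB : (1 + s/y) ^ β ≤ 2 := aux_pow_le_two hβ0 hβ1 hy hs.le hsy
    have h1 : Sker c α β t x y ≤ 1/s * E * (2 * (s/x) ^ α) * 2 := by
      rw [hSeq]; gcongr <;> positivity
    set d := y - x with hd_def
    have hd0 : 0 ≤ d := by simp only [hd_def]; linarith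
    rcases le_total d s with hds | hsd
    · -- d ≤ s
      have hy2s : y ≤ 2 * s := by
        have : y = x + d := by rw [hd_def]; ring
        linarith
      have hsc : s ^ (α - 1) ≤ 2 * y ^ (α - 1) := half_base hs hy hy2s hα1 (by linarith)
      have h2 : 1/s * E * (2 * (s/x) ^ α) * 2 ≤ 1/s * 1 * (2 * (s/x) ^ α) * 2 := by
        gcongr <;> positivity
      have h3 : 1/s * 1 * (2 * (s/x) ^ α) * 2 = 4 * (s ^ (α - 1) / x ^ α) := by
        rw [Real.div_rpow hs.le hx.le, show α - 1 = α + (-1) by ring, Real.rpow_add hs,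
          Real.rpow_neg_one]
        field_simp
        ring
      have h5 : Sker c α β t x y ≤ 8 * (y ^ (α - 1) / x ^ α) := by
        calc Sker c α β t x y ≤ 1/s * E * (2 * (s/x) ^ α) * 2 := h1
          _ ≤ 1/s * 1 * (2 * (s/x) ^ α) * 2 := h2
          _ = 4 * (s ^ (α - 1) / x ^ α) := h3
          _ ≤ 4 * (2 * y ^ (α - 1) / x ^ α) := by gcongr
          _ = 8 * (y ^ (α - 1) / x ^ α) := by ring
      rw [hVeq]
      calc Sker c α β t x y ≤ 8 * (y ^ (α - 1) / x ^ α) := h5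
        _ ≤ 8 * (c + 1) * (y ^ (α - 1) / x ^ α) :=
            mul_le_mul_of_nonneg_right (by linarith) hV0
    · -- s ≤ d
      have hdpos : 0 < d := lt_of_lt_of_le hs hsd
      have hu : E ≤ c * s ^ 2 / d ^ 2 := by
        have hueq : E = Real.exp (-(d ^ 2 / (c * s ^ 2))) := by
          rw [hE_def, hts]; congr 2; rw [hd_def]; ring
        have hupos : 0 < d ^ 2 / (c * s ^ 2) := by positivity
        have hle : d ^ 2 / (c * s ^ 2) ≤ Real.exp (d ^ 2 / (c * s ^ 2)) := by
          linarith [Real.add_one_le_exp (d ^ 2 / (c * s ^ 2))]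
        rw [hueq, Real.exp_neg]
        calc (Real.exp (d ^ 2 / (c * s ^ 2)))⁻¹ ≤ (d ^ 2 / (c * s ^ 2))⁻¹ :=
              inv_anti₀ hupos hle
          _ = c * s ^ 2 / d ^ 2 := by field_simp
      have hb1 : s / d ≤ 1 := (div_le_one hdpos).mpr hsd
      have hbpos : 0 < s / d := by positivity
      have hrp : (s/d) ^ (2:ℝ) ≤ (s/d) ^ (1 - α) :=
        Real.rpow_le_rpow_of_exponent_ge hbpos hb1 (by linarith)
      have hrp2 : (s/d) ^ (2:ℝ) = s ^ 2 / d ^ 2 := by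
        rw [show (2:ℝ) = ((2:ℕ):ℝ) by norm_num, Real.rpow_natCast, div_pow]
      have hE2 : E ≤ c * (s/d) ^ (1 - α) := by
        calc E ≤ c * s ^ 2 / d ^ 2 := hu
          _ = c * (s/d) ^ (2:ℝ) := by rw [hrp2]; ring
          _ ≤ c * (s/d) ^ (1 - α) := mul_le_mul_of_nonneg_left hrp hc.le
      have h2 : 1/s * E * (2 * (s/x) ^ α) * 2 ≤ 1/s * (c * (s/d) ^ (1 - α)) * (2 * (s/x) ^ α) * 2 := by
        gcongr <;> positivity
      have e1 : s ^ ((1:ℝ) - α) = s / s ^ α := by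
        rw [eq_div_iff hsα.ne', ← Real.rpow_add hs]
        norm_num
      have h3 : 1/s * (c * (s/d) ^ (1 - α)) * (2 * (s/x) ^ α) * 2
          = 4 * c * (d ^ (α - 1) / x ^ α) := by
        have e2 : d ^ (α - 1) = (d ^ ((1:ℝ) - α))⁻¹ := by
          rw [show α - 1 = -(1 - α) by ring, Real.rpow_neg hdpos.le]
        have hd1α : (0:ℝ) < d ^ ((1:ℝ) - α) := Real.rpow_pos_of_pos hdpos _
        rw [Real.div_rpow hs.le hdpos.le, Real.div_rpow hs.le hx.le, e2, e1]
        field_simp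
        ring
      have hdy : y ≤ 2 * d := by
        have : y = x + d := by rw [hd_def]; ring
        linarith
      have hdc : d ^ (α - 1) ≤ 2 * y ^ (α - 1) := half_base hdpos hy hdy hα1 (by linarith)
      have h5 : Sker c α β t x y ≤ 8 * c * (y ^ (α - 1) / x ^ α) := by
        calc Sker c α β t x y ≤ 1/s * E * (2 * (s/x) ^ α) * 2 := h1
          _ ≤ 1/s * (c * (s/d) ^ (1 - α)) * (2 * (s/x) ^ α) * 2 := h2
          _ = 4 * c * (d ^ (α - 1) / x ^ α) := h3
          _ ≤ 4 * c * (2 * y ^ (α - 1) / x ^ α) := by gcongr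
          _ = 8 * c * (y ^ (α - 1) / x ^ α) := by ring
      rw [hVeq]
      calc Sker c α β t x y ≤ 8 * c * (y ^ (α - 1) / x ^ α) := h5
        _ ≤ 8 * (c + 1) * (y ^ (α - 1) / x ^ α) :=
            mul_le_mul_of_nonneg_right (by linarith) hV0

lemma left_side {α x y : ℝ} (hα1 : α ≤ 1) (hx : 0 < x) (hy : 0 < y) (hxy : x ≤ y) :
    (1/y) * (y/x) ^ α ≤ 2 * (Set.indicator (Set.Ioo (y/2) (2*y)) (fun _ => 1/x) x +
      Set.indicator (Set.Ioc 0 (y/2)) (fun _ => 1/y * (y/x) ^ α) x) := by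
  have hval : (0:ℝ) ≤ 1/y * (y/x) ^ α := by positivity
  by_cases hx2 : x ≤ y/2
  · rw [Set.indicator_of_mem (show x ∈ Set.Ioc 0 (y/2) from ⟨hx, hx2⟩)]
    have h0 : (0:ℝ) ≤ Set.indicator (Set.Ioo (y/2) (2*y)) (fun _ => 1/x) x :=
      Set.indicator_nonneg (fun a _ => by positivity) x
    linarith
  · push_neg at hx2
    rw [Set.indicator_of_mem (show x ∈ Set.Ioo (y/2) (2*y) from ⟨hx2, by linarith⟩)]
    have h0 : (0:ℝ) ≤ Set.indicator (Set.Ioc 0 (y/2)) (fun _ => 1/y * (y/x) ^ α) x :=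
      Set.indicator_nonneg (fun a _ => by positivity) x
    have h1 : (y/x) ^ α ≤ y/x := by
      calc (y/x) ^ α ≤ (y/x) ^ (1:ℝ) :=
            Real.rpow_le_rpow_of_exponent_le ((one_le_div hx).mpr hxy) hα1
        _ = y/x := Real.rpow_one _
    have h2 : 1/y * (y/x) ^ α ≤ 1/x := by
      have := mul_le_mul_of_nonneg_left h1 (le_of_lt (show (0:ℝ) < 1/y by positivity))
      calc 1/y * (y/x) ^ α ≤ 1/y * (y/x) := this
        _ = 1/x := by field_simp
    linarith

lemma right_side {β x y : ℝ} (hβ1 : β ≤ 1) (hx : 0 < x) (hy : 0 < y) (hyx : y ≤ x) :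
    (1/x) * (x/y) ^ β ≤ 2 * (Set.indicator (Set.Ioo (y/2) (2*y)) (fun _ => 1/x) x +
      Set.indicator (Set.Ici (2*y)) (fun _ => 1/x * (x/y) ^ β) x) := by
  have hval : (0:ℝ) ≤ 1/x * (x/y) ^ β := by positivity
  by_cases hx2 : 2*y ≤ x
  · rw [Set.indicator_of_mem (show x ∈ Set.Ici (2*y) from hx2)]
    have h0 : (0:ℝ) ≤ Set.indicator (Set.Ioo (y/2) (2*y)) (fun _ => 1/x) x :=
      Set.indicator_nonneg (fun a _ => by positivity) x
    linarith
  · push_neg at hx2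
    rw [Set.indicator_of_mem (show x ∈ Set.Ioo (y/2) (2*y) from ⟨by linarith, hx2⟩)]
    have h0 : (0:ℝ) ≤ Set.indicator (Set.Ici (2*y)) (fun _ => 1/x * (x/y) ^ β) x :=
      Set.indicator_nonneg (fun a _ => by positivity) x
    have h1 : (x/y) ^ β ≤ x/y := by
      calc (x/y) ^ β ≤ (x/y) ^ (1:ℝ) :=
            Real.rpow_le_rpow_of_exponent_le ((one_le_div hy).mpr hyx) hβ1
        _ = x/y := Real.rpow_one _
    have h2 : x/y ≤ 2 := by rw [div_le_iff₀ hy]; linarith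
    have h3 : 1/x * (x/y) ^ β ≤ 1/x * 2 := by
      have : (x/y) ^ β ≤ 2 := le_trans h1 h2
      exact mul_le_mul_of_nonneg_left this (by positivity)
    linarith

lemma sker_swap (c α β t x y : ℝ) : Sker c α β t x y = Sker c β α t y x := by
  rw [Sker, Sker, show (y - x) ^ 2 = (x - y) ^ 2 by ring]
  ring

theorem statement16 (α β c : ℝ) (hα0 : 0 ≤ α) (hα1 : α < 1) (hβ0 : 0 ≤ β) (hβ1 : β < 1)
    (hαβ : α + β < 1) (hc : 0 < c) :
    ∃ C : ℝ, 0 < C ∧ ∀ t : ℝ, 0 < t → ∀ x : ℝ, 0 < x → ∀ y : ℝ, 0 < y →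
      Sker c α β t x y ≤
        C * ((1 / Real.sqrt t) * Real.exp (-((x - y) ^ 2 / (c * t))) +
          Set.indicator (Set.Ioo (y / 2) (2 * y)) (fun _ => 1 / x) x +
          Set.indicator (Set.Ici (2 * y)) (fun _ => 1 / x * (x / y) ^ β) x +
          Set.indicator (Set.Ioc 0 (y / 2)) (fun _ => 1 / y * (y / x) ^ α) x) := by
  refine ⟨16 * (c + 1), by positivity, ?_⟩
  intro t ht x hx y hy
  have hs : 0 < Real.sqrt t := Real.sqrt_pos.mpr ht
  set T1 := (1 / Real.sqrt t) * Real.exp (-((x - y) ^ 2 / (c * t))) with hT1_def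
  set T2 := Set.indicator (Set.Ioo (y / 2) (2 * y)) (fun _ => 1 / x) x with hT2_def
  set T3 := Set.indicator (Set.Ici (2 * y)) (fun _ => 1 / x * (x / y) ^ β) x with hT3_def
  set T4 := Set.indicator (Set.Ioc 0 (y / 2)) (fun _ => 1 / y * (y / x) ^ α) x with hT4_def
  have hT10 : 0 ≤ T1 := by rw [hT1_def]; positivity
  have hT20 : 0 ≤ T2 := by
    rw [hT2_def]; exact Set.indicator_nonneg (fun a _ => by positivity) x
  have hT30 : 0 ≤ T3 := by
    rw [hT3_def]; exact Set.indicator_nonneg (fun a _ => by positivity) x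
  have hT40 : 0 ≤ T4 := by
    rw [hT4_def]; exact Set.indicator_nonneg (fun a _ => by positivity) x
  have hCpos : (0:ℝ) ≤ 16 * (c + 1) := by linarith
  rcases le_total x y with hxy | hyx
  · rcases le_total (Real.sqrt t) x with hsx | hxs
    · -- √t ≤ x ≤ y
      have hA := aux_pow_le_two hα0 hα1.le hx hs.le hsx
      have hB := aux_pow_le_two hβ0 hβ1.le hy hs.le (le_trans hsx hxy)
      have h1 : Sker c α β t x y ≤ T1 * 2 * 2 := by
        have hSeq : Sker c α β t x y
            = T1 * (1 + Real.sqrt t / x) ^ α * (1 + Real.sqrt t / y) ^ β := by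
          rw [Sker, ← hT1_def]
        rw [hSeq]
        gcongr
      calc Sker c α β t x y ≤ T1 * 2 * 2 := h1
        _ = 4 * T1 := by ring
        _ ≤ 16 * (c + 1) * T1 := mul_le_mul_of_nonneg_right (by linarith) hT10
        _ ≤ 16 * (c + 1) * (T1 + T2 + T3 + T4) :=
            mul_le_mul_of_nonneg_left (by linarith) hCpos
    · -- x ≤ √t, x ≤ y
      have h1 := core_left hα0 hα1.le hβ0 hβ1.le hαβ.le hc ht hx hy hxy hxs
      have h2 := left_side hα1.le hx hy hxy
      rw [← hT2_def, ← hT4_def] at h2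
      calc Sker c α β t x y ≤ 8 * (c + 1) * (1/y * (y/x) ^ α) := h1
        _ ≤ 8 * (c + 1) * (2 * (T2 + T4)) :=
            mul_le_mul_of_nonneg_left h2 (by linarith)
        _ = 16 * (c + 1) * (T2 + T4) := by ring
        _ ≤ 16 * (c + 1) * (T1 + T2 + T3 + T4) :=
            mul_le_mul_of_nonneg_left (by linarith) hCpos
  · rcases le_total (Real.sqrt t) y with hsy | hys
    · -- √t ≤ y ≤ x
      have hA := aux_pow_le_two hα0 hα1.le hx hs.le (le_trans hsy hyx)
      have hB := aux_pow_le_two hβ0 hβ1.le hy hs.le hsy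
      have h1 : Sker c α β t x y ≤ T1 * 2 * 2 := by
        have hSeq : Sker c α β t x y
            = T1 * (1 + Real.sqrt t / x) ^ α * (1 + Real.sqrt t / y) ^ β := by
          rw [Sker, ← hT1_def]
        rw [hSeq]
        gcongr
      calc Sker c α β t x y ≤ T1 * 2 * 2 := h1
        _ = 4 * T1 := by ring
        _ ≤ 16 * (c + 1) * T1 := mul_le_mul_of_nonneg_right (by linarith) hT10
        _ ≤ 16 * (c + 1) * (T1 + T2 + T3 + T4) :=
            mul_le_mul_of_nonneg_left (by linarith) hCpos
    · -- y ≤ √t, y ≤ x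
      have h1 := core_left hβ0 hβ1.le hα0 hα1.le (by linarith) hc ht hy hx hyx hys
      have h2 := right_side hβ1.le hx hy hyx
      rw [← hT2_def, ← hT3_def] at h2
      calc Sker c α β t x y = Sker c β α t y x := sker_swap c α β t x y
        _ ≤ 8 * (c + 1) * (1/x * (x/y) ^ β) := h1
        _ ≤ 8 * (c + 1) * (2 * (T2 + T3)) :=
            mul_le_mul_of_nonneg_left h2 (by linarith)
        _ = 16 * (c + 1) * (T2 + T3) := by ring
        _ ≤ 16 * (c + 1) * (T1 + T2 + T3 + T4) :=
            mul_le_mul_of_nonneg_left (by linarith) hCpos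
end
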